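/- arXiv:2503.11998 — 3 statements merged into one kernel-verified Lean document; each statement's English description precedes it below -/
import Mathlib

section
/- Let v = (x, λ) ∈ V \ Γ and ε > 0, and let w(v) = (d(v), μ(v)) be an ε-optimal solution of Q(v). Then there exist another ε-optimal solution ŵ(v) = (d̂(v), μ̂(v)) of Q(v) and a point ρ(v) ∈ Y such that: (i) ‖w(v) − ŵ(v)‖_V ≤ √ε; (ii) dist(−f'(x) − L_xx(v)d̂(v) − G'(x)*ρ(v), N_{νB_X}(d̂(v))) ≤ √ε, where N_{νB_X}(d) := {φ ∈ X* : ⟨φ, p − d⟩ ≤ 0 for all p ∈ X with ‖p‖_X ≤ ν} and the distance is taken in X*; (iii) σ(v)·‖ρ(v) − μ̂(v)‖_Y ≤ √ε; (iv) ρ(v) ∈ N_K(G(x) + G'(x)d̂(v) − σ(v)(μ̂(v) − λ)). -/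
open Filter Topology Metric Set

noncomputable section

variable {X Y : Type*} [NormedAddCommGroup X] [NormedSpace ℝ X] [CompleteSpace X]
  [NormedAddCommGroup Y] [InnerProductSpace ℝ Y] [CompleteSpace Y]

/-- The functional `h ↦ ⟪λ, G'(x) h⟫_Y`, i.e. the term `G'(x)* λ ∈ X*`. -/
def adjT (G : X → Y) (x : X) (lam : Y) : X →L[ℝ] ℝ :=
  (innerSL ℝ lam).comp (fderiv ℝ G x)

/-- `L_x(v) = f'(x) + G'(x)* λ`, the partial derivative of the Lagrangian in `x`. -/
def LxD (f : X → ℝ) (G : X → Y) (v : X × Y) : X →L[ℝ] ℝ :=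
  fderiv ℝ f v.1 + adjT G v.1 v.2

/-- `L_xx(v)`, the second partial derivative of the Lagrangian in `x`. -/
def LxxD (f : X → ℝ) (G : X → Y) (v : X × Y) : X →L[ℝ] X →L[ℝ] ℝ :=
  fderiv ℝ (fun z => LxD f G (z, v.2)) v.1

/-- Normal cone `N_K(y)` of the closed convex set `K` at `y`. -/
def NK (K : Set Y) (y : Y) : Set Y := {lam | ∀ p ∈ K, (inner ℝ lam (p - y) : ℝ) ≤ 0}

/-- Tangent cone `T_K(y)` (sequential definition). -/
def TK (K : Set Y) (y : Y) : Set Y :=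
  {p | ∃ (yk : ℕ → Y) (tk : ℕ → ℝ), (∀ n, yk n ∈ K) ∧ (∀ n, 0 < tk n) ∧
    Tendsto tk atTop (𝓝 0) ∧ Tendsto (fun n => (tk n)⁻¹ • (yk n - y)) atTop (𝓝 p)}

/-- KKT point of the problem `min f(x) s.t. G(x) ∈ K`. -/
def IsKKT (f : X → ℝ) (G : X → Y) (K : Set Y) (v : X × Y) : Prop :=
  G v.1 ∈ K ∧ LxD f G v = 0 ∧ v.2 ∈ NK K (G v.1)

/-- `σ(v) = ‖f'(x) + G'(x)*λ‖ + ‖G(x) - P_K(G(x) + λ)‖`. -/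
def sigmaF (f : X → ℝ) (G : X → Y) (PK : Y → Y) (v : X × Y) : ℝ :=
  ‖LxD f G v‖ + ‖G v.1 - PK (G v.1 + v.2)‖

/-- The objective `φ_v` of the stabilized subproblem. -/
def phiQ (f : X → ℝ) (G : X → Y) (PK : Y → Y) (v w : X × Y) : ℝ :=
  fderiv ℝ f v.1 w.1 + (1 / 2) * LxxD f G v w.1 w.1 + (sigmaF f G PK v / 2) * ‖w.2‖ ^ 2

/-- Feasibility for problem `Q(v)`. -/
def FeasQ (f : X → ℝ) (G : X → Y) (K : Set Y) (PK : Y → Y) (ν : ℝ) (v w : X × Y) : Prop :=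
  G v.1 + fderiv ℝ G v.1 w.1 - sigmaF f G PK v • (w.2 - v.2) ∈ K ∧ ‖w.1‖ ≤ ν

/-- `w` is an `ε`-optimal solution of problem `Q(v)`. -/
def IsEpsOpt (f : X → ℝ) (G : X → Y) (K : Set Y) (PK : Y → Y) (ν : ℝ)
    (v w : X × Y) (ε : ℝ) : Prop :=
  FeasQ f G K PK ν v w ∧
    phiQ f G PK v w ≤ sInf (phiQ f G PK v '' {w' | FeasQ f G K PK ν v w'}) + ε

/-- Strict Robinson constraint qualification at `vb = (x̄, λ̄)`. -/
def SRCQ (G : X → Y) (K : Set Y) (vb : X × Y) : Prop :=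
  (0 : Y) ∈ interior {y : Y | ∃ h : X, ∃ k ∈ {y' ∈ K | (inner ℝ vb.2 (y' - G vb.1) : ℝ) = 0},
    y = G vb.1 + fderiv ℝ G vb.1 h - k}
set_option linter.unusedSectionVars false

section Aux

variable {X Y : Type*} [NormedAddCommGroup X] [NormedSpace ℝ X] [CompleteSpace X]
  [NormedAddCommGroup Y] [NormedSpace ℝ Y] [CompleteSpace Y]

/-- limit auxiliary: if `a ≤ t * b` for all small positive `t`, then `a ≤ 0`. -/
lemma aux_le_zero {a b : ℝ} (h : ∀ t : ℝ, 0 < t → t ≤ 1 → a ≤ t * b) : a ≤ 0 := by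
  have ht : Tendsto (fun t : ℝ => t * b) (𝓝[>] (0:ℝ)) (𝓝 0) := by
    have : Tendsto (fun t : ℝ => t * b) (𝓝 (0:ℝ)) (𝓝 (0 * b)) :=
      (continuous_id.mul continuous_const).tendsto 0
    simpa using this.mono_left nhdsWithin_le_nhds
  refine ge_of_tendsto ht ?_
  filter_upwards [Ioc_mem_nhdsGT_of_mem (by simp : (0:ℝ) ∈ Ico (0:ℝ) 1)] with t htt
  exact h t htt.1 htt.2

/-- Sum-norm distance on a product. -/
def Dsum (z w : X × Y) : ℝ := ‖z.1 - w.1‖ + ‖z.2 - w.2‖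

lemma Dsum_nonneg (z w : X × Y) : 0 ≤ Dsum z w :=
  add_nonneg (norm_nonneg _) (norm_nonneg _)

lemma Dsum_self (z : X × Y) : Dsum z z = 0 := by simp [Dsum]

lemma Dsum_comm (z w : X × Y) : Dsum z w = Dsum w z := by
  simp [Dsum, norm_sub_rev]

lemma Dsum_triangle (a b c : X × Y) : Dsum a c ≤ Dsum a b + Dsum b c := by
  have h1 : ‖a.1 - c.1‖ ≤ ‖a.1 - b.1‖ + ‖b.1 - c.1‖ := norm_sub_le_norm_sub_add_norm_sub _ _ _
  have h2 : ‖a.2 - c.2‖ ≤ ‖a.2 - b.2‖ + ‖b.2 - c.2‖ := norm_sub_le_norm_sub_add_norm_sub _ _ _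
  simp only [Dsum]; linarith

lemma dist_le_Dsum (z w : X × Y) : dist z w ≤ Dsum z w := by
  rw [Prod.dist_eq]
  refine max_le ?_ ?_ <;>
    [ (calc dist z.1 w.1 = ‖z.1 - w.1‖ := dist_eq_norm _ _
        _ ≤ Dsum z w := le_add_of_nonneg_right (norm_nonneg _));
      (calc dist z.2 w.2 = ‖z.2 - w.2‖ := dist_eq_norm _ _
        _ ≤ Dsum z w := le_add_of_nonneg_left (norm_nonneg _))]

/-- Ekeland's variational principle on a closed subset of `X × Y` with the sum metric. -/
lemma ekeland_sum {S : Set (X × Y)} (hS : IsClosed S) (φ : X × Y → ℝ)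
    (hφ : Continuous φ) {Bd : ℝ} (hbd : ∀ z ∈ S, Bd ≤ φ z)
    {ε lam : ℝ} (hε : 0 < ε) (hlam : 0 < lam)
    {x₀ : X × Y} (hx₀S : x₀ ∈ S) (hx₀ : ∀ z ∈ S, φ x₀ ≤ φ z + ε) :
    ∃ xh ∈ S, Dsum x₀ xh ≤ lam ∧ φ xh ≤ φ x₀ ∧
      ∀ z ∈ S, φ xh ≤ φ z + (ε / lam) * Dsum z xh := by
  set c : ℝ := ε / lam with hc
  have hcpos : 0 < c := div_pos hε hlam
  -- the improvement relation
  set Rel : X × Y → X × Y → Prop := fun a b => φ a + c * Dsum a b ≤ φ b with hRel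
  have hRel_refl : ∀ a, Rel a a := fun a => by simp [hRel, Dsum_self]
  have hRel_trans : ∀ a b e, Rel a b → Rel b e → Rel a e := by
    intro a b e hab hbe
    have := Dsum_triangle a b e
    have : c * Dsum a e ≤ c * Dsum a b + c * Dsum b e := by
      rw [← mul_add]; exact mul_le_mul_of_nonneg_left this hcpos.le
    simp only [hRel] at *
    linarith
  -- one choice step
  have hstep : ∀ (n : ℕ) (a : X × Y), a ∈ S → ∃ z, (z ∈ S ∧ Rel z a) ∧
      ∀ z' ∈ S, Rel z' a → φ z ≤ φ z' + (1/2 : ℝ)^n := by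
    intro n a haS
    set T : Set ℝ := φ '' {z | z ∈ S ∧ Rel z a} with hT
    have hTne : T.Nonempty := ⟨φ a, ⟨a, ⟨haS, hRel_refl a⟩, rfl⟩⟩
    have hTbd : BddBelow T := by
      refine ⟨Bd, ?_⟩; rintro t ⟨z, hz, rfl⟩; exact hbd z hz.1
    obtain ⟨t, ⟨z, hz, rfl⟩, hlt⟩ := Real.lt_sInf_add_pos hTne
      (show (0:ℝ) < (1/2:ℝ)^n by positivity)
    refine ⟨z, ⟨hz.1, hz.2⟩, ?_⟩
    intro z' hz'S hz'R
    have : sInf T ≤ φ z' := csInf_le hTbd ⟨z', ⟨hz'S, hz'R⟩, rfl⟩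
    linarith
  -- the sequence
  obtain ⟨u, hu0, huP⟩ : ∃ u : ℕ → {a : X × Y // a ∈ S}, u 0 = ⟨x₀, hx₀S⟩ ∧
      ∀ n, Rel (u (n+1)).1 (u n).1 ∧
        ∀ z' ∈ S, Rel z' (u n).1 → φ (u (n+1)).1 ≤ φ z' + (1/2 : ℝ)^n := by
    choose g hg1 hg2 using hstep
    exact ⟨fun n => Nat.rec ⟨x₀, hx₀S⟩ (fun n p => ⟨g n p.1 p.2, (hg1 n p.1 p.2).1⟩) n,
      rfl, fun n => ⟨(hg1 n _ _).2, hg2 n _ _⟩⟩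
  -- chain of improvements
  have hchain : ∀ n m, n ≤ m → Rel (u m).1 (u n).1 := by
    intro n m hnm
    induction m with
    | zero => cases Nat.le_zero.1 hnm; exact hRel_refl _
    | succ m ih =>
      rcases Nat.lt_or_ge n (m+1) with h | h
      · exact hRel_trans _ _ _ (huP m).1 (ih (Nat.lt_succ_iff.1 h))
      · have : n = m + 1 := le_antisymm hnm h
        subst this; exact hRel_refl _
  have hmono : ∀ n m, n ≤ m → φ (u m).1 ≤ φ (u n).1 := by
    intro n m hnm
    have := hchain n m hnm
    have hD := mul_nonneg hcpos.le (Dsum_nonneg (u m).1 (u n).1)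
    simp only [hRel] at this; linarith
  -- convergence of values
  have hbdd : BddBelow (range fun n => φ (u n).1) := by
    refine ⟨Bd, ?_⟩; rintro t ⟨n, rfl⟩; exact hbd _ (u n).2
  set A : ℝ := ⨅ n, φ (u n).1 with hA
  have hAle : ∀ n, A ≤ φ (u n).1 := fun n => ciInf_le hbdd n
  have htendA : Tendsto (fun n => φ (u n).1) atTop (𝓝 A) :=
    tendsto_atTop_ciInf (fun n m hnm => hmono n m hnm) hbdd
  -- Cauchy
  have hDsum_bound : ∀ n m, n ≤ m → Dsum (u m).1 (u n).1 ≤ (φ (u n).1 - φ (u m).1) / c := by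
    intro n m hnm
    have := hchain n m hnm
    simp only [hRel] at this
    rw [le_div_iff₀ hcpos]; linarith
  have hcauchy : CauchySeq (fun n => (u n).1) := by
    apply cauchySeq_of_le_tendsto_0 (fun N => (φ (u N).1 - A) / c)
    · intro n m N hn hm
      rcases le_total n m with h | h
      · calc dist (u n).1 (u m).1 = dist (u m).1 (u n).1 := dist_comm _ _
          _ ≤ Dsum (u m).1 (u n).1 := dist_le_Dsum _ _
          _ ≤ (φ (u n).1 - φ (u m).1) / c := hDsum_bound n m h
          _ ≤ (φ (u N).1 - A) / c := by
              have h1 := hmono N n hn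
              have h2 := hAle m
              exact div_le_div_of_nonneg_right (by linarith) hcpos.le
      · calc dist (u n).1 (u m).1 ≤ Dsum (u n).1 (u m).1 := dist_le_Dsum _ _
          _ ≤ (φ (u m).1 - φ (u n).1) / c := hDsum_bound m n h
          _ ≤ (φ (u N).1 - A) / c := by
              have h1 := hmono N m hm
              have h2 := hAle n
              exact div_le_div_of_nonneg_right (by linarith) hcpos.le
    · have : Tendsto (fun N => φ (u N).1 - A) atTop (𝓝 (A - A)) :=
        htendA.sub tendsto_const_nhds
      simpa using this.div_const c
  obtain ⟨xh, hxh⟩ := cauchySeq_tendsto_of_complete hcauchy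
  have hxhS : xh ∈ S := hS.mem_of_tendsto hxh (Eventually.of_forall fun n => (u n).2)
  have hφxh : Tendsto (fun n => φ (u n).1) atTop (𝓝 (φ xh)) := (hφ.tendsto xh).comp hxh
  have hφA : φ xh = A := tendsto_nhds_unique hφxh htendA
  -- Rel xh (u n)
  have hRelxh : ∀ n, Rel xh (u n).1 := by
    intro n
    have hclosed : IsClosed {z : X × Y | Rel z (u n).1} := by
      have hcont : Continuous fun z : X × Y => φ z + c * Dsum z (u n).1 := by
        apply hφ.add
        exact (continuous_const.mul (((continuous_fst.sub continuous_const).norm).add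
          ((continuous_snd.sub continuous_const).norm)))
      exact isClosed_le hcont continuous_const
    refine hclosed.mem_of_tendsto hxh ?_
    filter_upwards [eventually_ge_atTop n] with m hm
    exact hchain n m hm
  refine ⟨xh, hxhS, ?_, ?_, ?_⟩
  · -- distance bound
    have h0 := hRelxh 0
    rw [hu0] at h0
    simp only [hRel] at h0
    have hup : φ x₀ ≤ φ xh + ε := hx₀ xh hxhS
    have h2 : Dsum xh x₀ ≤ ε / c := (le_div_iff₀ hcpos).2 (by linarith)
    have h3 : ε / c = lam := by rw [hc]; field_simp
    rw [h3] at h2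
    rw [Dsum_comm]
    exact h2
  · have h0 := hRelxh 0
    rw [hu0] at h0
    simp only [hRel] at h0
    have := mul_nonneg hcpos.le (Dsum_nonneg xh x₀)
    linarith
  · -- approximate minimality
    intro z hzS
    by_contra hcon
    push_neg at hcon
    have hzrel : Rel z xh := by simp only [hRel]; linarith
    have hzn : ∀ n, Rel z (u n).1 := fun n => hRel_trans _ _ _ hzrel (hRelxh n)
    have hiter : ∀ n, φ (u (n+1)).1 ≤ φ z + (1/2:ℝ)^n := fun n =>
      (huP n).2 z hzS (hzn n)
    have hlim : Tendsto (fun n => φ z + (1/2:ℝ)^n) atTop (𝓝 (φ z + 0)) :=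
      tendsto_const_nhds.add (tendsto_pow_atTop_nhds_zero_of_lt_one (by norm_num) (by norm_num))
    have hAz : A ≤ φ z := by
      have h1 : Tendsto (fun n => φ (u (n+1)).1) atTop (𝓝 A) :=
        htendA.comp (tendsto_add_atTop_nat 1)
      have := le_of_tendsto_of_tendsto' h1 hlim hiter
      simpa using this
    rw [← hφA] at hAz
    have := mul_nonneg hcpos.le (Dsum_nonneg z xh)
    linarith


end Aux

section Aux2
variable {X : Type*} [NormedAddCommGroup X] [NormedSpace ℝ X]

/-- Hahn-Banach sandwich construction: if a continuous functional `ξ` satisfies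
`ξ (p - d) ≤ e * ‖p - d‖` on the ball of radius `ν`, then `ξ` is within `e` of the
normal cone to the ball at `d`. -/
lemma sandwich_normal_cone {ν : ℝ} (hν : 0 < ν) (d : X) (hd : ‖d‖ ≤ ν)
    (ξ : X →L[ℝ] ℝ) {e : ℝ} (he : 0 ≤ e)
    (hbase : ∀ p : X, ‖p‖ ≤ ν → ξ (p - d) ≤ e * ‖p - d‖) :
    ∃ n : X →L[ℝ] ℝ, (∀ p : X, ‖p‖ ≤ ν → n (p - d) ≤ 0) ∧ ‖ξ - n‖ ≤ e := by
  classical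
  set C : Set X := {u | ∃ s : ℝ, 0 ≤ s ∧ ∃ p : X, ‖p‖ ≤ ν ∧ u = s • (p - d)} with hC
  have hC0 : (0 : X) ∈ C := ⟨0, le_rfl, 0, by simpa using hν.le, by simp⟩
  have hCξ : ∀ u ∈ C, ξ u ≤ e * ‖u‖ := by
    rintro u ⟨s, hs, p, hp, rfl⟩
    rw [map_smul, norm_smul, Real.norm_eq_abs, abs_of_nonneg hs]
    calc s • ξ (p - d) = s * ξ (p - d) := rfl
      _ ≤ s * (e * ‖p - d‖) := mul_le_mul_of_nonneg_left (hbase p hp) hs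
      _ = e * (s * ‖p - d‖) := by ring
  have hCsmul : ∀ (c : ℝ), 0 < c → ∀ u ∈ C, c • u ∈ C := by
    rintro c hc u ⟨s, hs, p, hp, rfl⟩
    exact ⟨c * s, mul_nonneg hc.le hs, p, hp, by rw [smul_smul]⟩
  have hCadd : ∀ u ∈ C, ∀ u' ∈ C, u + u' ∈ C := by
    rintro u ⟨s, hs, p, hp, rfl⟩ u' ⟨s', hs', p', hp', rfl⟩
    rcases eq_or_lt_of_le (add_nonneg hs hs' : (0:ℝ) ≤ s + s') with h0 | h0
    · have hs0 : s = 0 := by linarith [hs, hs']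
      have hs'0 : s' = 0 := by linarith [hs, hs']
      subst hs0; subst hs'0
      simpa using hC0
    · refine ⟨s + s', h0.le, (s/(s+s')) • p + (s'/(s+s')) • p', ?_, ?_⟩
      · calc ‖(s/(s+s')) • p + (s'/(s+s')) • p'‖ ≤ ‖(s/(s+s')) • p‖ + ‖(s'/(s+s')) • p'‖ :=
            norm_add_le _ _
          _ = (s/(s+s')) * ‖p‖ + (s'/(s+s')) * ‖p'‖ := by
              rw [norm_smul, norm_smul, Real.norm_eq_abs, Real.norm_eq_abs,
                abs_of_nonneg (by positivity), abs_of_nonneg (by positivity)]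
          _ ≤ (s/(s+s')) * ν + (s'/(s+s')) * ν := by
              gcongr <;> positivity
          _ = ν := by field_simp
      · have hne : s + s' ≠ 0 := h0.ne'
        match_scalars <;> field_simp <;> ring
  -- the sublinear envelope
  set R : X → Set ℝ := fun h => {t | ∃ u ∈ C, t = e * ‖h + u‖ - ξ u} with hR
  have hRne : ∀ h, (R h).Nonempty := fun h => ⟨e * ‖h + 0‖ - ξ 0, 0, hC0, rfl⟩
  have hRlb : ∀ h, ∀ t ∈ R h, -(e * ‖h‖) ≤ t := by
    rintro h t ⟨u, hu, rfl⟩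
    have h1 : ξ u ≤ e * ‖u‖ := hCξ u hu
    have h2 : ‖u‖ - ‖h + u‖ ≤ ‖h‖ := by
      have := norm_sub_norm_le u (h + u)
      have h3 : ‖u - (h + u)‖ = ‖h‖ := by rw [show u - (h + u) = -h by abel, norm_neg]
      linarith
    nlinarith [norm_nonneg (h + u), norm_nonneg u, norm_nonneg h]
  have hRbdd : ∀ h, BddBelow (R h) := fun h => ⟨-(e * ‖h‖), fun t ht => hRlb h t ht⟩
  set r : X → ℝ := fun h => sInf (R h) with hr
  have hr_le : ∀ h, r h ≤ e * ‖h‖ := by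
    intro h
    have : e * ‖h + 0‖ - ξ 0 ∈ R h := ⟨0, hC0, rfl⟩
    calc r h ≤ e * ‖h + 0‖ - ξ 0 := csInf_le (hRbdd h) this
      _ = e * ‖h‖ := by simp
  have hr_lb : ∀ h, -(e * ‖h‖) ≤ r h := fun h => le_csInf (hRne h) (hRlb h)
  have hr_zero : r 0 = 0 := le_antisymm (by simpa using hr_le 0) (by simpa using hr_lb 0)
  have hr_hom : ∀ c : ℝ, 0 < c → ∀ h, r (c • h) = c * r h := by
    have key : ∀ c : ℝ, 0 < c → ∀ h, r (c • h) ≤ c * r h := by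
      intro c hc h
      have step : ∀ t ∈ R h, r (c • h) ≤ c * t := by
        rintro t ⟨u, hu, rfl⟩
        have : e * ‖c • h + c • u‖ - ξ (c • u) ∈ R (c • h) := ⟨c • u, hCsmul c hc u hu, rfl⟩
        calc r (c • h) ≤ e * ‖c • h + c • u‖ - ξ (c • u) := csInf_le (hRbdd _) this
          _ = c * (e * ‖h + u‖ - ξ u) := by
              rw [← smul_add, norm_smul, map_smul, Real.norm_eq_abs, abs_of_nonneg hc.le]
              simp only [smul_eq_mul]; ring
      have : r (c • h) / c ≤ r h := by
        refine le_csInf (hRne h) ?_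
        intro t ht
        rw [div_le_iff₀ hc]
        calc r (c • h) ≤ c * t := step t ht
          _ = t * c := mul_comm _ _
      calc r (c • h) = (r (c • h) / c) * c := by field_simp
        _ ≤ r h * c := mul_le_mul_of_nonneg_right this hc.le
        _ = c * r h := mul_comm _ _
    intro c hc h
    refine le_antisymm (key c hc h) ?_
    have h2 := key c⁻¹ (by positivity) (c • h)
    rw [inv_smul_smul₀ hc.ne'] at h2
    have := mul_le_mul_of_nonneg_left h2 hc.le
    rw [← mul_assoc] at this
    field_simp at this
    linarith
  have hr_add : ∀ h₁ h₂, r (h₁ + h₂) ≤ r h₁ + r h₂ := by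
    intro h₁ h₂
    have step : ∀ t₁ ∈ R h₁, ∀ t₂ ∈ R h₂, r (h₁ + h₂) ≤ t₁ + t₂ := by
      rintro t₁ ⟨u₁, hu₁, rfl⟩ t₂ ⟨u₂, hu₂, rfl⟩
      have hmem : e * ‖(h₁ + h₂) + (u₁ + u₂)‖ - ξ (u₁ + u₂) ∈ R (h₁ + h₂) :=
        ⟨u₁ + u₂, hCadd u₁ hu₁ u₂ hu₂, rfl⟩
      calc r (h₁ + h₂) ≤ e * ‖(h₁ + h₂) + (u₁ + u₂)‖ - ξ (u₁ + u₂) := csInf_le (hRbdd _) hmem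
        _ ≤ (e * ‖h₁ + u₁‖ - ξ u₁) + (e * ‖h₂ + u₂‖ - ξ u₂) := by
            have : ‖(h₁ + h₂) + (u₁ + u₂)‖ ≤ ‖h₁ + u₁‖ + ‖h₂ + u₂‖ := by
              rw [show (h₁ + h₂) + (u₁ + u₂) = (h₁ + u₁) + (h₂ + u₂) by abel]
              exact norm_add_le _ _
            rw [map_add]
            nlinarith [this]
    have s1 : ∀ t₂ ∈ R h₂, r (h₁ + h₂) - t₂ ≤ r h₁ := by
      intro t₂ ht₂
      refine le_csInf (hRne h₁) fun t₁ ht₁ => ?_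
      linarith [step t₁ ht₁ t₂ ht₂]
    have s2 : r (h₁ + h₂) - r h₁ ≤ r h₂ := by
      refine le_csInf (hRne h₂) fun t₂ ht₂ => ?_
      linarith [s1 t₂ ht₂]
    linarith
  -- Hahn-Banach extension of the zero map on the trivial subspace
  obtain ⟨m, _, hm⟩ := exists_extension_of_le_sublinear
    ⟨⊥, (0 : (⊥ : Submodule ℝ X) →ₗ[ℝ] ℝ)⟩ r hr_hom hr_add
    (fun x => by
      have hx : (x : X) = 0 := (Submodule.mem_bot ℝ).1 x.2
      simp [hx, hr_zero])
  have hm_bound : ∀ h, |m h| ≤ e * ‖h‖ := by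
    intro h
    rw [abs_le]
    constructor
    · have := (hm (-h)).trans (hr_le (-h))
      rw [map_neg, norm_neg] at this
      linarith
    · exact (hm h).trans (hr_le h)
  set mclm : X →L[ℝ] ℝ := LinearMap.mkContinuous m e
    (fun h => by rw [Real.norm_eq_abs]; exact hm_bound h) with hmclm
  have hm_norm : ‖mclm‖ ≤ e := LinearMap.mkContinuous_norm_le m he _
  have hm_ge : ∀ u ∈ C, ξ u ≤ m u := by
    intro u hu
    have hmem : e * ‖-u + u‖ - ξ u ∈ R (-u) := ⟨u, hu, rfl⟩
    have h1 : m (-u) ≤ r (-u) := hm (-u)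
    have h2 : r (-u) ≤ e * ‖-u + u‖ - ξ u := csInf_le (hRbdd _) hmem
    rw [map_neg] at h1
    simp only [neg_add_cancel, norm_zero, mul_zero, zero_sub] at h2
    linarith
  refine ⟨ξ - mclm, ?_, ?_⟩
  · intro p hp
    have hmem : p - d ∈ C := ⟨1, zero_le_one, p, hp, (one_smul ℝ _).symm⟩
    have h2 := hm_ge _ hmem
    have h3 : (ξ - mclm) (p - d) = ξ (p - d) - m (p - d) := rfl
    rw [h3]; linarith
  · rw [sub_sub_cancel]
    exact hm_norm

end Aux2


set_option maxHeartbeats 1000000 in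
lemma sigma_pos {X Y : Type*} [NormedAddCommGroup X] [NormedSpace ℝ X] [CompleteSpace X]
    [NormedAddCommGroup Y] [InnerProductSpace ℝ Y] [CompleteSpace Y]
    (f : X → ℝ) (G : X → Y) (K : Set Y) (PK : Y → Y)
    (hKv : Convex ℝ K)
    (hPK : ∀ y : Y, PK y ∈ K ∧ ∀ k ∈ K, ‖y - PK y‖ ≤ ‖y - k‖)
    (v : X × Y) (hv : ¬ IsKKT f G K v) : 0 < sigmaF f G PK v := by
  have hσ0 : 0 ≤ sigmaF f G PK v := add_nonneg (norm_nonneg _) (norm_nonneg _)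
  rcases lt_or_eq_of_le hσ0 with h | h
  · exact h
  exfalso
  apply hv
  have hsum : ‖LxD f G v‖ + ‖G v.1 - PK (G v.1 + v.2)‖ = 0 := h.symm
  obtain ⟨h1, h2⟩ := (add_eq_zero_iff_of_nonneg (norm_nonneg _) (norm_nonneg _)).1 hsum
  have hLxD0 : LxD f G v = 0 := norm_eq_zero.1 h1
  have hGP : G v.1 = PK (G v.1 + v.2) := sub_eq_zero.1 (norm_eq_zero.1 h2)
  have hGK : G v.1 ∈ K := by rw [hGP]; exact (hPK _).1
  refine ⟨hGK, hLxD0, ?_⟩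
  intro p hp
  refine aux_le_zero (b := ‖p - G v.1‖^2 / 2) ?_
  intro t ht0 ht1
  have hkK : G v.1 + t • (p - G v.1) ∈ K := by
    have h3 := hKv hGK hp (by linarith : (0:ℝ) ≤ 1 - t) ht0.le (by ring)
    have e : (1 - t) • G v.1 + t • p = G v.1 + t • (p - G v.1) := by module
    rwa [e] at h3
  have hproj := (hPK (G v.1 + v.2)).2 _ hkK
  rw [← hGP] at hproj
  have hL : G v.1 + v.2 - G v.1 = v.2 := by abel
  have hR : G v.1 + v.2 - (G v.1 + t • (p - G v.1)) = v.2 - t • (p - G v.1) := by abel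
  rw [hL, hR] at hproj
  have hsq : ‖v.2‖^2 ≤ ‖v.2 - t • (p - G v.1)‖^2 := by
    nlinarith [norm_nonneg (v.2 - t • (p - G v.1)), norm_nonneg v.2]
  rw [norm_sub_sq_real, real_inner_smul_right, norm_smul, Real.norm_eq_abs, mul_pow,
    sq_abs] at hsq
  nlinarith [ht0]

set_option maxHeartbeats 1000000 in
lemma lxx_symm {X Y : Type*} [NormedAddCommGroup X] [NormedSpace ℝ X] [CompleteSpace X]
    [NormedAddCommGroup Y] [InnerProductSpace ℝ Y] [CompleteSpace Y]
    (f : X → ℝ) (G : X → Y) (hf : ContDiff ℝ 2 f) (hG : ContDiff ℝ 2 G)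
    (v : X × Y) : ∀ a b : X, LxxD f G v a b = LxxD f G v b a := by
  have hdf : Differentiable ℝ f := hf.differentiable (by norm_num)
  have hdG : Differentiable ℝ G := hG.differentiable (by norm_num)
  have hder : ∀ z, HasFDerivAt (fun z => f z + (inner ℝ v.2 (G z) : ℝ))
      (LxD f G (z, v.2)) z := by
    intro z
    have h1 : HasFDerivAt f (fderiv ℝ f z) z := (hdf z).hasFDerivAt
    have h2 : HasFDerivAt G (fderiv ℝ G z) z := (hdG z).hasFDerivAt
    have h3 : HasFDerivAt (fun u => (inner ℝ v.2 (G u) : ℝ))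
        ((innerSL ℝ v.2).comp (fderiv ℝ G z)) z := ((innerSL ℝ v.2).hasFDerivAt).comp z h2
    exact h1.add h3
  have hd1 : DifferentiableAt ℝ (fun z => fderiv ℝ f z) v.1 :=
    ((hf.fderiv_right (m := 1) (by norm_num)).differentiable one_ne_zero).differentiableAt
  have hdG' : DifferentiableAt ℝ (fun z => fderiv ℝ G z) v.1 :=
    ((hG.fderiv_right (m := 1) (by norm_num)).differentiable one_ne_zero).differentiableAt
  have hd2 : DifferentiableAt ℝ (fun z => (innerSL ℝ v.2).comp (fderiv ℝ G z)) v.1 :=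
    (differentiableAt_const _).clm_comp hdG'
  have hd' : DifferentiableAt ℝ (fun z => LxD f G (z, v.2)) v.1 := by
    have he : (fun z => LxD f G (z, v.2))
        = fun z => fderiv ℝ f z + (innerSL ℝ v.2).comp (fderiv ℝ G z) := rfl
    rw [he]
    exact hd1.add hd2
  have hB2 : HasFDerivAt (fun z => LxD f G (z, v.2)) (LxxD f G v) v.1 := by
    have h4 := hd'.hasFDerivAt
    have hBe : fderiv ℝ (fun z => LxD f G (z, v.2)) v.1 = LxxD f G v := rfl
    rwa [hBe] at h4
  intro a b
  exact second_derivative_symmetric hder hB2 a b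

set_option maxHeartbeats 1000000 in
/-- Existence of a subgradient at `0` for the value function of a convex
parametrized minimization problem. -/
lemma exists_subgradient_value {Y : Type*}
    [NormedAddCommGroup Y] [InnerProductSpace ℝ Y] [CompleteSpace Y]
    {W : Type*} [AddCommGroup W] [Module ℝ W]
    (FP : Y → Set W) (J : W → ℝ) (L : ℝ) (hL : 0 ≤ L)
    (hmem : ∀ (a b : ℝ), 0 < a → 0 < b → a + b = 1 → ∀ y₁ y₂ : Y, ∀ z₁ ∈ FP y₁, ∀ z₂ ∈ FP y₂,
      a • z₁ + b • z₂ ∈ FP (a • y₁ + b • y₂) ∧ J (a • z₁ + b • z₂) ≤ a * J z₁ + b * J z₂)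
    (hshift : ∀ y y' : Y, ∀ z ∈ FP y', ∃ z' ∈ FP y, J z' ≤ J z + L * ‖y - y'‖)
    (hlb : ∀ y : Y, ∀ z ∈ FP y, -(L * ‖y‖) ≤ J z)
    (hne : ∀ y : Y, (FP y).Nonempty)
    (h0 : ∀ z ∈ FP 0, 0 ≤ J z) (hz0 : ∃ z ∈ FP 0, J z = 0) :
    ∃ ζ : Y, ∀ y : Y, ∀ z ∈ FP y, (inner ℝ ζ y : ℝ) ≤ J z := by
  classical
  set pfun : Y → ℝ := fun y => sInf (J '' FP y) with hpdef
  have hbddB : ∀ y : Y, BddBelow (J '' FP y) := fun y =>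
    ⟨-(L * ‖y‖), by rintro t ⟨z, hz, rfl⟩; exact hlb y z hz⟩
  have hneB : ∀ y : Y, (J '' FP y).Nonempty := fun y => (hne y).image J
  have hple : ∀ y : Y, ∀ z ∈ FP y, pfun y ≤ J z := fun y z hz =>
    csInf_le (hbddB y) (mem_image_of_mem _ hz)
  have hp0 : pfun 0 = 0 := by
    obtain ⟨z, hz, hJz⟩ := hz0
    have hle : pfun 0 ≤ 0 := by
      have := hple 0 z hz
      rwa [hJz] at this
    have hge : 0 ≤ pfun 0 := le_csInf (hneB 0) (by rintro t ⟨z', hz', rfl⟩; exact h0 z' hz')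
    linarith
  have hLip : ∀ y y' : Y, pfun y ≤ pfun y' + L * ‖y - y'‖ := by
    intro y y'
    have key : ∀ t ∈ J '' FP y', pfun y - L * ‖y - y'‖ ≤ t := by
      rintro t ⟨z, hz, rfl⟩
      obtain ⟨z', hz', hJz'⟩ := hshift y y' z hz
      have := hple y z' hz'
      linarith
    have := le_csInf (hneB y') key
    linarith
  have hpcont : Continuous pfun := by
    have hlip : LipschitzWith (⟨L, hL⟩ : NNReal) pfun := by
      apply LipschitzWith.of_dist_le_mul
      intro y y'
      have h1 := hLip y y'
      have h2 := hLip y' y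
      rw [norm_sub_rev] at h2
      rw [Real.dist_eq, dist_eq_norm]
      change |pfun y - pfun y'| ≤ L * ‖y - y'‖; rw [abs_le]
      constructor <;> linarith
    exact hlip.continuous
  have hpconv : ConvexOn ℝ univ pfun := by
    rw [convexOn_iff_forall_pos]
    refine ⟨convex_univ, ?_⟩
    intro y₁ _ y₂ _ a b ha hb hab
    have key : ∀ z₁ ∈ FP y₁, ∀ z₂ ∈ FP y₂,
        pfun (a • y₁ + b • y₂) ≤ a * J z₁ + b * J z₂ := by
      intro z₁ hz₁ z₂ hz₂
      obtain ⟨hm, hj⟩ := hmem a b ha hb hab y₁ y₂ z₁ hz₁ z₂ hz₂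
      exact le_trans (hple _ _ hm) hj
    have step1 : ∀ z₁ ∈ FP y₁, pfun (a • y₁ + b • y₂) ≤ a * J z₁ + b * pfun y₂ := by
      intro z₁ hz₁
      have h2 : ∀ t ∈ J '' FP y₂, (pfun (a • y₁ + b • y₂) - a * J z₁) / b ≤ t := by
        rintro t ⟨z₂, hz₂, rfl⟩
        rw [div_le_iff₀ hb]
        linarith [key z₁ hz₁ z₂ hz₂]
      have h3 := le_csInf (hneB y₂) h2
      rw [div_le_iff₀ hb] at h3
      linarith [h3]
    have h3 : ∀ t ∈ J '' FP y₁, (pfun (a • y₁ + b • y₂) - b * pfun y₂) / a ≤ t := by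
      rintro t ⟨z₁, hz₁, rfl⟩
      rw [div_le_iff₀ ha]
      linarith [step1 z₁ hz₁]
    have h4 := le_csInf (hneB y₁) h3
    rw [div_le_iff₀ ha] at h4
    have hsmul : pfun (a • y₁ + b • y₂) ≤ a * pfun y₁ + b * pfun y₂ := by linarith [h4]
    simpa [smul_eq_mul] using hsmul
  obtain ⟨ζ, hζ⟩ : ∃ ζ : Y, ∀ y : Y, (inner ℝ ζ y : ℝ) ≤ pfun y := by
    set E : Set (Y × ℝ) := {p | pfun p.1 < p.2} with hEdef
    have hEconv : Convex ℝ E := by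
      have h1 := hpconv.convex_strict_epigraph
      have he : {p : Y × ℝ | p.1 ∈ univ ∧ pfun p.1 < p.2} = E := by
        ext p
        simp [hEdef]
      rwa [he] at h1
    have hEopen : IsOpen E := isOpen_lt (hpcont.comp continuous_fst) continuous_snd
    have h00 : ((0 : Y), (0 : ℝ)) ∉ E := by
      simp [hEdef, hp0]
    obtain ⟨Λ, hΛ⟩ := geometric_hahn_banach_open_point hEconv hEopen h00
    have hΛ0 : Λ ((0 : Y), (0 : ℝ)) = 0 := by
      have he : ((0 : Y), (0 : ℝ)) = (0 : Y × ℝ) := rfl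
      rw [he, map_zero]
    set β : ℝ := Λ ((0 : Y), (1 : ℝ)) with hβdef
    have hβneg : β < 0 := by
      have h1 : ((0 : Y), (1 : ℝ)) ∈ E := by
        simp [hEdef, hp0]
      have h2 := hΛ _ h1
      rwa [hΛ0] at h2
    have hdecomp : ∀ (y : Y) (t : ℝ), Λ (y, t) = Λ (y, 0) + t * β := by
      intro y t
      have e : ((y, t) : Y × ℝ) = (y, (0:ℝ)) + t • ((0:Y), (1:ℝ)) := by
        simp [Prod.ext_iff]
      rw [e, map_add, map_smul, smul_eq_mul, hβdef]
    have hkey : ∀ y : Y, Λ (y, 0) + β * pfun y ≤ 0 := by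
      intro y
      refine aux_le_zero (b := -β) ?_
      intro δ hδ _
      have hmem2 : ((y, pfun y + δ) : Y × ℝ) ∈ E := by
        simp only [hEdef, mem_setOf_eq]
        linarith
      have h1 := hΛ _ hmem2
      rw [hΛ0, hdecomp] at h1
      linarith [h1]
    refine ⟨(-β)⁻¹ • ((InnerProductSpace.toDual ℝ Y).symm
      (Λ.comp (ContinuousLinearMap.inl ℝ Y ℝ))), ?_⟩
    intro y
    have hdual : (inner ℝ ((InnerProductSpace.toDual ℝ Y).symm
        (Λ.comp (ContinuousLinearMap.inl ℝ Y ℝ))) y : ℝ) = Λ (y, 0) := by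
      rw [InnerProductSpace.toDual_symm_apply]
      rfl
    rw [real_inner_smul_left, hdual]
    have h2 := hkey y
    have hβpos : 0 < -β := by linarith
    rw [inv_mul_le_iff₀ hβpos]
    linarith [h2]
  exact ⟨ζ, fun y z hz => le_trans (hζ y) (hple y z hz)⟩


set_option maxHeartbeats 4000000 in
/-- from an `ε`-optimal solution `w(v)` of `Q(v)` one obtains another
`ε`-optimal solution `ŵ(v)` and a multiplier `ρ(v)` satisfying the approximate KKT
system of `Q(v)` up to `√ε`. -/
theorem stmt1
    (f : X → ℝ) (G : X → Y) (K : Set Y) (PK : Y → Y) (ν : ℝ)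
    (hK : K.Nonempty) (hKc : IsClosed K) (hKv : Convex ℝ K)
    (hf : ContDiff ℝ 2 f) (hG : ContDiff ℝ 2 G)
    (hPK : ∀ y : Y, PK y ∈ K ∧ ∀ k ∈ K, ‖y - PK y‖ ≤ ‖y - k‖)
    (hν : 0 < ν)
    (v : X × Y) (hv : ¬ IsKKT f G K v) (ε : ℝ) (hε : 0 < ε)
    (w : X × Y) (hw : IsEpsOpt f G K PK ν v w ε) :
    ∃ wh : X × Y, ∃ ρ : Y,
      IsEpsOpt f G K PK ν v wh ε ∧
      ‖w.1 - wh.1‖ + ‖w.2 - wh.2‖ ≤ Real.sqrt ε ∧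
      infDist (-(fderiv ℝ f v.1) - LxxD f G v wh.1 - adjT G v.1 ρ)
        {φ : X →L[ℝ] ℝ | ∀ p : X, ‖p‖ ≤ ν → φ (p - wh.1) ≤ 0} ≤ Real.sqrt ε ∧
      sigmaF f G PK v * ‖ρ - wh.2‖ ≤ Real.sqrt ε ∧
      ρ ∈ NK K (G v.1 + fderiv ℝ G v.1 wh.1 - sigmaF f G PK v • (wh.2 - v.2)) := by
  classical
  obtain ⟨hwF, hwOpt⟩ := hw
  set σ : ℝ := sigmaF f G PK v with hσdef
  set F1 : X →L[ℝ] ℝ := fderiv ℝ f v.1 with hF1def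
  set Gd : X →L[ℝ] Y := fderiv ℝ G v.1 with hGddef
  set B : X →L[ℝ] X →L[ℝ] ℝ := LxxD f G v with hBdef
  set sε : ℝ := Real.sqrt ε with hsedef
  have hsεpos : 0 < sε := Real.sqrt_pos.2 hε
  have hσ0 : 0 ≤ σ := add_nonneg (norm_nonneg _) (norm_nonneg _)
  have hσ : 0 < σ := sigma_pos f G K PK hKv hPK v hv
  have hsymm : ∀ a b : X, B a b = B b a := lxx_symm f G hf hG v
  -- the (affine) constraint map and the feasible set
  set A : X × Y → Y := fun z => G v.1 + Gd z.1 - σ • (z.2 - v.2) with hAdef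
  have hA_comb : ∀ (a b : X × Y) (s t : ℝ), s + t = 1 →
      A (s • a + t • b) = s • A a + t • A b := by
    intro a b s t hst
    simp only [hAdef, Prod.fst_add, Prod.snd_add, Prod.smul_fst, Prod.smul_snd, map_add,
      map_smul]
    have hs : s = 1 - t := by linarith
    subst hs
    module
  set Feas : Set (X × Y) := {z | A z ∈ K ∧ ‖z.1‖ ≤ ν} with hFeasdef
  have hFeas_eq : {w' : X × Y | FeasQ f G K PK ν v w'} = Feas := rfl
  set φ : X × Y → ℝ := phiQ f G PK v with hφdef
  have hφ_eq : ∀ z : X × Y, φ z = F1 z.1 + (1/2) * B z.1 z.1 + (σ/2) * ‖z.2‖^2 :=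
    fun z => rfl
  have hwFeas : w ∈ Feas := hwF
  have hφcont : Continuous φ := by
    have h1 : Continuous fun z : X × Y => F1 z.1 := F1.continuous.comp continuous_fst
    have hb : Continuous fun q : X × X => B q.1 q.2 := B.continuous₂
    have h2 : Continuous fun z : X × Y => B z.1 z.1 :=
      hb.comp (continuous_fst.prodMk continuous_fst)
    have h3 : Continuous fun z : X × Y => ‖z.2‖^2 := (continuous_snd.norm).pow 2
    have he : φ = fun z : X × Y => F1 z.1 + (1/2) * B z.1 z.1 + (σ/2) * ‖z.2‖^2 :=
      funext hφ_eq
    rw [he]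
    exact (h1.add (continuous_const.mul h2)).add (continuous_const.mul h3)
  set Bd : ℝ := -(‖F1‖*ν) - (1/2) * (‖B‖*ν*ν) with hBddef
  have hbd : ∀ z ∈ Feas, Bd ≤ φ z := by
    intro z hz
    have hz1 : ‖z.1‖ ≤ ν := hz.2
    have e1 : |F1 z.1| ≤ ‖F1‖ * ν := by
      calc |F1 z.1| = ‖F1 z.1‖ := (Real.norm_eq_abs _).symm
        _ ≤ ‖F1‖ * ‖z.1‖ := F1.le_opNorm z.1
        _ ≤ ‖F1‖ * ν := mul_le_mul_of_nonneg_left hz1 (norm_nonneg F1)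
    have e2 : |B z.1 z.1| ≤ ‖B‖ * ν * ν := by
      calc |B z.1 z.1| = ‖B z.1 z.1‖ := (Real.norm_eq_abs _).symm
        _ ≤ ‖B‖ * ‖z.1‖ * ‖z.1‖ := B.le_opNorm₂ z.1 z.1
        _ ≤ ‖B‖ * ν * ν := by
            have h0 := norm_nonneg z.1
            have h1 := norm_nonneg B
            have h2 : ‖z.1‖ * ‖z.1‖ ≤ ν * ν := mul_le_mul hz1 hz1 h0 (le_trans h0 hz1)
            nlinarith [mul_le_mul_of_nonneg_left h2 h1]
    have e3 : 0 ≤ (σ/2) * ‖z.2‖^2 := by positivity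
    rw [hφ_eq z, hBddef]
    have n1 := neg_abs_le (F1 z.1)
    have n2 := neg_abs_le (B z.1 z.1)
    linarith
  have hFeas_closed : IsClosed Feas := by
    have hAc : Continuous A := by
      refine (continuous_const.add (Gd.continuous.comp continuous_fst)).sub ?_
      exact (continuous_snd.sub continuous_const).const_smul σ
    have h1 : IsClosed {z : X × Y | A z ∈ K} := hKc.preimage hAc
    have h2 : IsClosed {z : X × Y | ‖z.1‖ ≤ ν} :=
      isClosed_le (continuous_fst.norm) continuous_const
    exact h1.inter h2
  have hx₀ : ∀ z ∈ Feas, φ w ≤ φ z + ε := by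
    intro z hz
    refine le_trans hwOpt ?_
    have h1 : sInf (φ '' Feas) ≤ φ z :=
      csInf_le ⟨Bd, by rintro t ⟨u, hu, rfl⟩; exact hbd u hu⟩ (mem_image_of_mem _ hz)
    rw [hFeas_eq]
    linarith
  -- Ekeland's variational principle
  obtain ⟨wh, hwhF, hwhD, hwhφ, hwhmin'⟩ :=
    ekeland_sum hFeas_closed φ hφcont hbd hε hsεpos hwFeas hx₀
  have hdiv : ε / sε = sε := Real.div_sqrt
  have hwhmin : ∀ z ∈ Feas, φ wh ≤ φ z + sε * Dsum z wh := by
    intro z hz; have := hwhmin' z hz; rwa [hdiv] at this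
  have hAwh : A wh ∈ K := hwhF.1
  have hwh_norm : ‖wh.1‖ ≤ ν := hwhF.2
  -- linear and quadratic parts of φ at wh
  set Lf : X × Y → ℝ := fun u => F1 u.1 + B wh.1 u.1 + σ * (inner ℝ wh.2 u.2 : ℝ) with hLfdef
  set Qf : X × Y → ℝ := fun u => (1/2) * B u.1 u.1 + (σ/2) * ‖u.2‖^2 with hQfdef
  have hexp : ∀ (u : X × Y) (θ : ℝ), φ (wh + θ • u) = φ wh + θ * Lf u + θ^2 * Qf u := by
    intro u θ
    have h1 : (wh + θ • u).1 = wh.1 + θ • u.1 := rfl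
    have h2 : (wh + θ • u).2 = wh.2 + θ • u.2 := rfl
    rw [hφ_eq, hφ_eq, h1, h2]
    have hBexp : B (wh.1 + θ • u.1) (wh.1 + θ • u.1)
        = B wh.1 wh.1 + θ * (2 * B wh.1 u.1) + θ^2 * B u.1 u.1 := by
      simp only [map_add, map_smul, ContinuousLinearMap.add_apply,
        ContinuousLinearMap.smul_apply, smul_eq_mul]
      rw [hsymm u.1 wh.1]
      ring
    have hnexp : ‖wh.2 + θ • u.2‖^2
        = ‖wh.2‖^2 + θ * (2 * (inner ℝ wh.2 u.2 : ℝ)) + θ^2 * ‖u.2‖^2 := by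
      rw [norm_add_sq_real, real_inner_smul_right, norm_smul, Real.norm_eq_abs, mul_pow,
        sq_abs]
      ring
    rw [hBexp, hnexp, map_add, map_smul]
    simp only [hLfdef, hQfdef, smul_eq_mul]
    ring
  have hseg : ∀ z ∈ Feas, ∀ θ : ℝ, 0 ≤ θ → θ ≤ 1 → wh + θ • (z - wh) ∈ Feas := by
    intro z hz θ h0 h1
    have hcomb : wh + θ • (z - wh) = (1 - θ) • wh + θ • z := by module
    constructor
    · rw [hcomb, hA_comb wh z (1 - θ) θ (by ring)]
      exact hKv hAwh hz.1 (by linarith) h0 (by ring)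
    · have e : (wh + θ • (z - wh)).1 = (1 - θ) • wh.1 + θ • z.1 := by rw [hcomb]; rfl
      rw [e]
      calc ‖(1 - θ) • wh.1 + θ • z.1‖ ≤ ‖(1 - θ) • wh.1‖ + ‖θ • z.1‖ := norm_add_le _ _
        _ = (1 - θ) * ‖wh.1‖ + θ * ‖z.1‖ := by
            rw [norm_smul, norm_smul, Real.norm_eq_abs, Real.norm_eq_abs,
              abs_of_nonneg (by linarith : (0:ℝ) ≤ 1 - θ), abs_of_nonneg h0]
        _ ≤ (1 - θ) * ν + θ * ν := by
            have := hz.2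
            have h3 : (0:ℝ) ≤ 1 - θ := by linarith
            have := hwh_norm
            nlinarith
        _ = ν := by ring
  -- the variational inequality
  have hVI : ∀ z ∈ Feas, 0 ≤ Lf (z - wh) + sε * Dsum z wh := by
    intro z hz
    have key : ∀ θ : ℝ, 0 < θ → θ ≤ 1 →
        -(Lf (z - wh) + sε * Dsum z wh) ≤ θ * Qf (z - wh) := by
      intro θ h0t h1t
      have hzθ := hseg z hz θ h0t.le h1t
      have hek := hwhmin _ hzθ
      rw [hexp (z - wh) θ] at hek
      have hDθ : Dsum (wh + θ • (z - wh)) wh = θ * Dsum z wh := by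
        have e1 : (wh + θ • (z - wh)).1 - wh.1 = θ • (z.1 - wh.1) := by
          show wh.1 + θ • (z.1 - wh.1) - wh.1 = θ • (z.1 - wh.1)
          abel
        have e2 : (wh + θ • (z - wh)).2 - wh.2 = θ • (z.2 - wh.2) := by
          show wh.2 + θ • (z.2 - wh.2) - wh.2 = θ • (z.2 - wh.2)
          abel
        simp only [Dsum]
        rw [e1, e2, norm_smul, norm_smul, Real.norm_eq_abs, abs_of_pos h0t]
        ring
      rw [hDθ] at hek
      have h4 : 0 ≤ θ * ((Lf (z - wh) + sε * Dsum z wh) + θ * Qf (z - wh)) := by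
        linarith [hek]
      have h5 : 0 ≤ (Lf (z - wh) + sε * Dsum z wh) + θ * Qf (z - wh) := by
        by_contra hneg
        push_neg at hneg
        linarith [mul_neg_of_pos_of_neg h0t hneg]
      linarith
    have := aux_le_zero key
    linarith
  -- linearity of Lf
  have hLf_add : ∀ u u' : X × Y, Lf (u + u') = Lf u + Lf u' := by
    intro u u'
    simp only [hLfdef, Prod.fst_add, Prod.snd_add, map_add, inner_add_right]
    ring
  have hLf0 : Lf 0 = 0 := by
    simp only [hLfdef, Prod.fst_zero, Prod.snd_zero, map_zero, inner_zero_right]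
    ring
  -- the value function of the perturbed problems
  set Jf : X × Y → ℝ := fun z => Lf (z - wh) + sε * Dsum z wh with hJfdef
  have hJfwh : Jf wh = 0 := by
    simp only [hJfdef, sub_self, hLf0, Dsum_self, mul_zero, add_zero]
  have hVIJ : ∀ z ∈ Feas, 0 ≤ Jf z := by
    intro z hz
    simp only [hJfdef]
    exact hVI z hz
  set FP : Y → Set (X × Y) := fun y => {z | A z + y ∈ K ∧ ‖z.1‖ ≤ ν} with hFPdef
  have hshift : ∀ (y : Y) (z : X × Y), z ∈ FP y ↔ ((z.1, z.2 - σ⁻¹ • y) : X × Y) ∈ Feas := by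
    intro y z
    have e1 : σ • (σ⁻¹ • y) = y := by rw [smul_smul, mul_inv_cancel₀ hσ.ne', one_smul]
    have hA2 : A (z.1, z.2 - σ⁻¹ • y) = A z + y := by
      simp only [hAdef]
      rw [show z.2 - σ⁻¹ • y - v.2 = (z.2 - v.2) - σ⁻¹ • y by abel, smul_sub, e1]
      abel
    constructor
    · rintro ⟨h1, h2⟩
      exact ⟨by rw [hA2]; exact h1, h2⟩
    · rintro ⟨h1, h2⟩
      rw [hA2] at h1
      exact ⟨h1, h2⟩
  set Lc : ℝ := σ * ‖wh.2‖ + sε with hLcdef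
  have hLc0 : 0 ≤ Lc := by positivity
  have hJf_shift : ∀ (z : X × Y) (u : Y), Jf (z.1, z.2 + u) ≤ Jf z + Lc * ‖u‖ := by
    intro z u
    have hsplit : ((z.1, z.2 + u) : X × Y) - wh = (z - wh) + ((0 : X), u) := by
      ext
      · show z.1 - wh.1 = z.1 - wh.1 + 0
        abel
      · show z.2 + u - wh.2 = z.2 - wh.2 + u
        abel
    have hLfu : Lf ((0 : X), u) = σ * (inner ℝ wh.2 u : ℝ) := by
      simp only [hLfdef, map_zero]
      ring
    have hLf2 : Lf ((z.1, z.2 + u) - wh) = Lf (z - wh) + σ * (inner ℝ wh.2 u : ℝ) := by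
      rw [hsplit, hLf_add, hLfu]
    have hD2 : Dsum (z.1, z.2 + u) wh ≤ Dsum z wh + ‖u‖ := by
      simp only [Dsum]
      have h3 : ‖z.2 + u - wh.2‖ ≤ ‖z.2 - wh.2‖ + ‖u‖ := by
        rw [show z.2 + u - wh.2 = (z.2 - wh.2) + u by abel]
        exact norm_add_le _ _
      show ‖z.1 - wh.1‖ + ‖z.2 + u - wh.2‖ ≤ ‖z.1 - wh.1‖ + ‖z.2 - wh.2‖ + ‖u‖
      linarith
    have hCS : σ * (inner ℝ wh.2 u : ℝ) ≤ σ * (‖wh.2‖ * ‖u‖) :=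
      mul_le_mul_of_nonneg_left (real_inner_le_norm _ _) hσ0
    have hD3 := mul_le_mul_of_nonneg_left hD2 hsεpos.le
    simp only [hJfdef]
    rw [hLf2, hLcdef]
    linarith [hD3, hCS]
  have hFP_ne : ∀ y : Y, ((wh.1, wh.2 + σ⁻¹ • y) : X × Y) ∈ FP y := by
    intro y
    rw [hshift]
    have e : ((wh.1, wh.2 + σ⁻¹ • y) : X × Y).2 - σ⁻¹ • y = wh.2 := by
      show wh.2 + σ⁻¹ • y - σ⁻¹ • y = wh.2
      abel
    have e2 : (((wh.1, wh.2 + σ⁻¹ • y) : X × Y).1, ((wh.1, wh.2 + σ⁻¹ • y) : X × Y).2 - σ⁻¹ • y) = wh := by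
      rw [e]
    rw [e2]
    exact hwhF
  have hnormsmul : ∀ u : Y, ‖σ⁻¹ • u‖ = σ⁻¹ * ‖u‖ := by
    intro u
    rw [norm_smul, Real.norm_eq_abs, abs_of_pos (inv_pos.2 hσ)]
  have hJf_lb : ∀ (y : Y), ∀ z ∈ FP y, -(Lc * (σ⁻¹ * ‖y‖)) ≤ Jf z := by
    intro y z hz
    have hz' : ((z.1, z.2 - σ⁻¹ • y) : X × Y) ∈ Feas := (hshift y z).1 hz
    have h0 : 0 ≤ Jf (z.1, z.2 - σ⁻¹ • y) := hVIJ _ hz'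
    have h1 := hJf_shift z (-(σ⁻¹ • y))
    have e1 : ((z.1, z.2 + -(σ⁻¹ • y)) : X × Y) = ((z.1, z.2 - σ⁻¹ • y) : X × Y) := by
      rw [← sub_eq_add_neg]
    rw [e1, norm_neg, hnormsmul] at h1
    linarith
  obtain ⟨ζ, hζJ⟩ := exists_subgradient_value FP Jf (Lc * σ⁻¹)
    (by positivity)
    (by -- hmem
      intro a b ha hb hab y₁ y₂ z₁ hz₁ z₂ hz₂
      constructor
      · constructor
        · have e : A (a • z₁ + b • z₂) + (a • y₁ + b • y₂)
              = a • (A z₁ + y₁) + b • (A z₂ + y₂) := by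
            rw [hA_comb z₁ z₂ a b hab, smul_add, smul_add]
            abel
          rw [e]
          exact hKv hz₁.1 hz₂.1 ha.le hb.le hab
        · have e : (a • z₁ + b • z₂).1 = a • z₁.1 + b • z₂.1 := rfl
          rw [e]
          have hn := norm_add_le (a • z₁.1) (b • z₂.1)
          rw [norm_smul, norm_smul, Real.norm_eq_abs, Real.norm_eq_abs,
            abs_of_pos ha, abs_of_pos hb] at hn
          have h1 := mul_le_mul_of_nonneg_left hz₁.2 ha.le
          have h2 := mul_le_mul_of_nonneg_left hz₂.2 hb.le
          have h3 : a * ν + b * ν = ν := by rw [← add_mul, hab, one_mul]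
          linarith [hn, h1, h2, h3]
      · have hLfsm : ∀ (c : ℝ) (u : X × Y), Lf (c • u) = c * Lf u := by
          intro c u
          simp only [hLfdef, Prod.smul_fst, Prod.smul_snd, map_smul, real_inner_smul_right,
            smul_eq_mul]
          ring
        have hsplit : a • z₁ + b • z₂ - wh = a • (z₁ - wh) + b • (z₂ - wh) := by
          have hs : a = 1 - b := by linarith
          subst hs
          module
        have hLpart : Lf (a • z₁ + b • z₂ - wh) = a * Lf (z₁ - wh) + b * Lf (z₂ - wh) := by
          rw [hsplit, hLf_add, hLfsm, hLfsm]
        have hDpart : Dsum (a • z₁ + b • z₂) wh ≤ a * Dsum z₁ wh + b * Dsum z₂ wh := by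
          have e1 : (a • z₁ + b • z₂).1 - wh.1 = a • (z₁.1 - wh.1) + b • (z₂.1 - wh.1) := by
            show a • z₁.1 + b • z₂.1 - wh.1 = a • (z₁.1 - wh.1) + b • (z₂.1 - wh.1)
            have hs : a = 1 - b := by linarith
            subst hs
            module
          have e2 : (a • z₁ + b • z₂).2 - wh.2 = a • (z₁.2 - wh.2) + b • (z₂.2 - wh.2) := by
            show a • z₁.2 + b • z₂.2 - wh.2 = a • (z₁.2 - wh.2) + b • (z₂.2 - wh.2)
            have hs : a = 1 - b := by linarith
            subst hs
            module
          simp only [Dsum]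
          rw [e1, e2]
          have n1 := norm_add_le (a • (z₁.1 - wh.1)) (b • (z₂.1 - wh.1))
          have n2 := norm_add_le (a • (z₁.2 - wh.2)) (b • (z₂.2 - wh.2))
          rw [norm_smul, norm_smul, Real.norm_eq_abs, Real.norm_eq_abs, abs_of_pos ha,
            abs_of_pos hb] at n1
          rw [norm_smul, norm_smul, Real.norm_eq_abs, Real.norm_eq_abs, abs_of_pos ha,
            abs_of_pos hb] at n2
          linarith
        have hD4 := mul_le_mul_of_nonneg_left hDpart hsεpos.le
        simp only [hJfdef]
        rw [hLpart]
        linarith [hD4])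
    (by -- hshift
      intro y y' z hz
      refine ⟨(z.1, z.2 + σ⁻¹ • (y - y')), ?_, ?_⟩
      · rw [hshift]
        have e : z.2 + σ⁻¹ • (y - y') - σ⁻¹ • y = z.2 - σ⁻¹ • y' := by
          rw [smul_sub]
          abel
        have e2 : (((z.1, z.2 + σ⁻¹ • (y - y')) : X × Y).1,
            ((z.1, z.2 + σ⁻¹ • (y - y')) : X × Y).2 - σ⁻¹ • y)
            = ((z.1, z.2 - σ⁻¹ • y') : X × Y) := by
          show ((z.1, z.2 + σ⁻¹ • (y - y') - σ⁻¹ • y) : X × Y) = (z.1, z.2 - σ⁻¹ • y')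
          rw [e]
        rw [e2]
        exact (hshift y' z).1 hz
      · have h2 := hJf_shift z (σ⁻¹ • (y - y'))
        rw [hnormsmul] at h2
        have e3 : Lc * (σ⁻¹ * ‖y - y'‖) = Lc * σ⁻¹ * ‖y - y'‖ := by ring
        rw [e3] at h2
        exact h2)
    (by -- hlb
      intro y z hz
      have := hJf_lb y z hz
      have e : Lc * (σ⁻¹ * ‖y‖) = Lc * σ⁻¹ * ‖y‖ := by ring
      rw [e] at this
      exact this)
    (fun y => ⟨_, hFP_ne y⟩)
    (by -- h0
      intro z hz
      have hzF : z ∈ Feas := by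
        have h1 := (hshift 0 z).1 hz
        simpa using h1
      exact hVIJ z hzF)
    ⟨wh, by refine ⟨?_, hwh_norm⟩; simpa using hAwh, hJfwh⟩
  -- the master inequality
  have hmaster : ∀ (d : X) (μ : Y) (k : Y), ‖d‖ ≤ ν → k ∈ K →
      (inner ℝ ζ (k - A (d, μ)) : ℝ) ≤ Jf (d, μ) := by
    intro d μ k hd hk
    have hmem : ((d, μ) : X × Y) ∈ FP (k - A (d, μ)) := by
      refine ⟨?_, hd⟩
      simpa using hk
    exact hζJ _ _ hmem
  -- conclusions
  refine ⟨wh, ζ, ⟨hwhF, le_trans hwhφ hwOpt⟩, hwhD, ?_, ?_, ?_⟩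
  · -- (ii) the dual distance estimate
    set ξ : X →L[ℝ] ℝ := -F1 - B wh.1 - adjT G v.1 ζ with hξdef
    have hbase : ∀ p : X, ‖p‖ ≤ ν → ξ (p - wh.1) ≤ sε * ‖p - wh.1‖ := by
      intro p hp
      have h1 := hmaster p wh.2 (A wh) hp hAwh
      have e1 : A wh - A (p, wh.2) = -(Gd (p - wh.1)) := by
        simp only [hAdef, map_sub]
        abel
      have e2 : Jf (p, wh.2) = F1 (p - wh.1) + B wh.1 (p - wh.1) + sε * ‖p - wh.1‖ := by
        simp only [hJfdef, hLfdef, Dsum]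
        have c1 : ((p, wh.2) : X × Y) - wh = (p - wh.1, wh.2 - wh.2) := rfl
        rw [c1]
        simp only [sub_self, inner_zero_right, norm_zero, mul_zero, add_zero]
      rw [e1, e2] at h1
      rw [inner_neg_right] at h1
      have e3 : ξ (p - wh.1) = -(F1 (p - wh.1)) - B wh.1 (p - wh.1)
          - (inner ℝ ζ (Gd (p - wh.1)) : ℝ) := by
        simp only [hξdef, ContinuousLinearMap.sub_apply, ContinuousLinearMap.neg_apply]
        have e4 : adjT G v.1 ζ (p - wh.1) = (inner ℝ ζ (Gd (p - wh.1)) : ℝ) := rfl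
        rw [e4]
      rw [e3]
      linarith
    obtain ⟨n, hn1, hn2⟩ := sandwich_normal_cone hν wh.1 hwh_norm ξ hsεpos.le hbase
    refine le_trans (infDist_le_dist_of_mem (hn1 : n ∈ _)) ?_
    rw [dist_eq_norm]
    exact hn2
  · -- (iii)
    have key : ∀ u : Y, σ * (inner ℝ ζ u : ℝ) ≤ σ * (inner ℝ wh.2 u : ℝ) + sε * ‖u‖ := by
      intro u
      have h1 := hmaster wh.1 (wh.2 + u) (A wh) hwh_norm hAwh
      have e1 : A wh - A (wh.1, wh.2 + u) = σ • u := by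
        simp only [hAdef]
        rw [show wh.2 + u - v.2 = (wh.2 - v.2) + u by abel, smul_add]
        abel
      have e3 : Jf (wh.1, wh.2 + u) = σ * (inner ℝ wh.2 u : ℝ) + sε * ‖u‖ := by
        simp only [hJfdef, hLfdef, Dsum]
        have c1 : ((wh.1, wh.2 + u) : X × Y) - wh = (wh.1 - wh.1, wh.2 + u - wh.2) := rfl
        rw [c1]
        have c2 : wh.2 + u - wh.2 = u := by abel
        simp only [sub_self, map_zero, norm_zero, c2]
        ring
      rw [e1, e3, real_inner_smul_right] at h1
      linarith
    have h2 := key (ζ - wh.2)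
    have e4 : (inner ℝ ζ (ζ - wh.2) : ℝ) - (inner ℝ wh.2 (ζ - wh.2) : ℝ) = ‖ζ - wh.2‖^2 := by
      rw [← inner_sub_left, real_inner_self_eq_norm_sq]
    have e5 : σ * ((inner ℝ ζ (ζ - wh.2) : ℝ) - (inner ℝ wh.2 (ζ - wh.2) : ℝ)) = σ * ‖ζ - wh.2‖^2 := by
      rw [e4]
    have h3 : σ * ‖ζ - wh.2‖^2 ≤ sε * ‖ζ - wh.2‖ := by linarith [h2, e5]
    rcases eq_or_lt_of_le (norm_nonneg (ζ - wh.2)) with h0 | h0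
    · rw [← h0, mul_zero]
      exact hsεpos.le
    · have h5 : σ * ‖ζ - wh.2‖ * ‖ζ - wh.2‖ ≤ sε * ‖ζ - wh.2‖ := by linarith [h3]
      exact le_of_mul_le_mul_right h5 h0
  · -- (iv)
    intro p hp
    have h1 := hmaster wh.1 wh.2 p hwh_norm hp
    have e1 : A (wh.1, wh.2) = A wh := rfl
    rw [e1, hJfwh] at h1
    exact h1
end
end

section
/- Suppose the KKT point v̄ = (x̄, λ̄) satisfies (A1) and (A2), and for each v ∈ V \ Γ let w(v) = (d(v), μ(v)) be a σ(v)^6-optimal solution of Q(v). Then σ(v)·‖μ(v)‖_Y → 0 as ‖v − v̄‖_V → 0; that is, for every ε > 0 there exists δ > 0 such that σ(v)·‖μ(v)‖_Y < ε for all v ∈ V \ Γ with ‖v − v̄‖_V < δ. -/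
open Filter Topology Metric Set

noncomputable section

variable {X Y : Type*} [NormedAddCommGroup X] [NormedSpace ℝ X] [CompleteSpace X]
  [NormedAddCommGroup Y] [InnerProductSpace ℝ Y] [CompleteSpace Y]

section MyAux

lemma my_proj_vi {K : Set Y} (hKv : Convex ℝ K) (PK : Y → Y)
    (hPK : ∀ y : Y, PK y ∈ K ∧ ∀ k ∈ K, ‖y - PK y‖ ≤ ‖y - k‖) (u : Y) :
    ∀ k ∈ K, (inner ℝ (u - PK u) (k - PK u) : ℝ) ≤ 0 := by
  have hmem := (hPK u).1
  haveI : Nonempty K := ⟨⟨PK u, hmem⟩⟩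
  have heq : ‖u - PK u‖ = ⨅ w : K, ‖u - w‖ := by
    apply le_antisymm
    · exact le_ciInf fun ww => (hPK u).2 ww ww.2
    · exact ciInf_le ⟨0, by rintro a ⟨ww, rfl⟩; exact norm_nonneg _⟩ (⟨PK u, hmem⟩ : K)
  exact (norm_eq_iInf_iff_real_inner_le_zero hKv hmem).1 heq

lemma my_proj_lip {K : Set Y} (hKv : Convex ℝ K) (PK : Y → Y)
    (hPK : ∀ y : Y, PK y ∈ K ∧ ∀ k ∈ K, ‖y - PK y‖ ≤ ‖y - k‖) (u u' : Y) :
    ‖PK u - PK u'‖ ≤ ‖u - u'‖ := by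
  have h1 := my_proj_vi hKv PK hPK u (PK u') (hPK u').1
  have h2 := my_proj_vi hKv PK hPK u' (PK u) (hPK u).1
  rw [show PK u' - PK u = -(PK u - PK u') by abel, inner_neg_right] at h1
  have h3 : (0:ℝ) ≤ inner ℝ (u - u' - (PK u - PK u')) (PK u - PK u') := by
    rw [show u - u' - (PK u - PK u') = (u - PK u) - (u' - PK u') by abel, inner_sub_left]
    linarith
  rw [inner_sub_left] at h3
  have h4 := real_inner_le_norm (u - u') (PK u - PK u')
  have h5 := real_inner_self_eq_norm_sq (PK u - PK u')
  nlinarith [norm_nonneg (PK u - PK u'), norm_nonneg (u - u')]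

lemma my_proj_fixed {K : Set Y} (PK : Y → Y)
    (hPK : ∀ y : Y, PK y ∈ K ∧ ∀ k ∈ K, ‖y - PK y‖ ≤ ‖y - k‖) {y lam : Y}
    (hy : y ∈ K) (hl : ∀ p ∈ K, (inner ℝ lam (p - y) : ℝ) ≤ 0) :
    PK (y + lam) = y := by
  have hq := (hPK (y + lam)).1
  have h1 : ‖(y + lam) - PK (y + lam)‖ ≤ ‖lam‖ := by
    simpa using (hPK (y + lam)).2 y hy
  have h2 : (inner ℝ lam (PK (y + lam) - y) : ℝ) ≤ 0 := hl _ hq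
  have h3 : ‖lam + (y - PK (y + lam))‖ ^ 2
      = ‖lam‖ ^ 2 + 2 * inner ℝ lam (y - PK (y + lam)) + ‖y - PK (y + lam)‖ ^ 2 :=
    norm_add_sq_real _ _
  rw [show lam + (y - PK (y + lam)) = (y + lam) - PK (y + lam) by abel] at h3
  rw [show y - PK (y + lam) = -(PK (y + lam) - y) by abel, inner_neg_right] at h3
  have h1' : ‖(y + lam) - PK (y + lam)‖ ^ 2 ≤ ‖lam‖ ^ 2 :=
    pow_le_pow_left₀ (norm_nonneg _) h1 2
  rw [norm_neg] at h3
  have h5 : ‖PK (y + lam) - y‖ ^ 2 ≤ 0 := by nlinarith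
  have h6 : ‖PK (y + lam) - y‖ = 0 := by nlinarith [norm_nonneg (PK (y + lam) - y)]
  have := norm_eq_zero.1 h6
  rwa [sub_eq_zero] at this

lemma my_lxx (f : X → ℝ) (G : X → Y) (hf : ContDiff ℝ 2 f) (hG : ContDiff ℝ 2 G)
    (x : X) (lam : Y) :
    LxxD f G (x, lam) = fderiv ℝ (fderiv ℝ f) x
      + (ContinuousLinearMap.compL ℝ X Y ℝ (innerSL ℝ lam)).comp (fderiv ℝ (fderiv ℝ G) x) := by
  have hfd1 : ContDiff ℝ 1 (fderiv ℝ f) := hf.fderiv_right (by norm_num)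
  have hGd1 : ContDiff ℝ 1 (fderiv ℝ G) := hG.fderiv_right (by norm_num)
  set C := ContinuousLinearMap.compL ℝ X Y ℝ (innerSL ℝ lam) with hC
  have H1 : HasFDerivAt (fderiv ℝ f) (fderiv ℝ (fderiv ℝ f) x) x :=
    ((hfd1.differentiable one_ne_zero) x).hasFDerivAt
  have HG : HasFDerivAt (fderiv ℝ G) (fderiv ℝ (fderiv ℝ G) x) x :=
    ((hGd1.differentiable one_ne_zero) x).hasFDerivAt
  have H2 : HasFDerivAt (fun z => C (fderiv ℝ G z)) (C.comp (fderiv ℝ (fderiv ℝ G) x)) x :=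
    (C.hasFDerivAt).comp x HG
  have H : HasFDerivAt (fun z => LxD f G (z, lam))
      (fderiv ℝ (fderiv ℝ f) x + C.comp (fderiv ℝ (fderiv ℝ G) x)) x := H1.add H2
  exact H.fderiv

lemma my_lxx_norm (f : X → ℝ) (G : X → Y) (hf : ContDiff ℝ 2 f) (hG : ContDiff ℝ 2 G)
    (x : X) (lam : Y) :
    ‖LxxD f G (x, lam)‖ ≤ ‖fderiv ℝ (fderiv ℝ f) x‖ + ‖lam‖ * ‖fderiv ℝ (fderiv ℝ G) x‖ := by
  rw [my_lxx f G hf hG x lam]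
  have hadd := norm_add_le (fderiv ℝ (fderiv ℝ f) x)
    ((ContinuousLinearMap.compL ℝ X Y ℝ (innerSL ℝ lam)).comp (fderiv ℝ (fderiv ℝ G) x))
  refine hadd.trans (add_le_add le_rfl ?_)
  refine ContinuousLinearMap.opNorm_le_bound _ (by positivity) fun h => ?_
  have e1 : ((ContinuousLinearMap.compL ℝ X Y ℝ (innerSL ℝ lam)).comp
      (fderiv ℝ (fderiv ℝ G) x)) h = (innerSL ℝ lam).comp (fderiv ℝ (fderiv ℝ G) x h) := rfl
  rw [e1]
  calc ‖(innerSL ℝ lam).comp (fderiv ℝ (fderiv ℝ G) x h)‖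
      ≤ ‖innerSL ℝ lam‖ * ‖fderiv ℝ (fderiv ℝ G) x h‖ :=
        ContinuousLinearMap.opNorm_comp_le _ _
    _ ≤ ‖lam‖ * (‖fderiv ℝ (fderiv ℝ G) x‖ * ‖h‖) := by
        rw [innerSL_apply_norm]
        exact mul_le_mul_of_nonneg_left ((fderiv ℝ (fderiv ℝ G) x).le_opNorm h) (norm_nonneg _)
    _ = ‖lam‖ * ‖fderiv ℝ (fderiv ℝ G) x‖ * ‖h‖ := by ring

lemma my_lxd_cont (f : X → ℝ) (G : X → Y) (hf : ContDiff ℝ 2 f) (hG : ContDiff ℝ 2 G) :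
    Continuous (fun v : X × Y => LxD f G v) := by
  have hfd1 : ContDiff ℝ 1 (fderiv ℝ f) := hf.fderiv_right (by norm_num)
  have hGd1 : ContDiff ℝ 1 (fderiv ℝ G) := hG.fderiv_right (by norm_num)
  show Continuous fun v : X × Y => fderiv ℝ f v.1 + (innerSL ℝ v.2).comp (fderiv ℝ G v.1)
  exact ((hfd1.continuous).comp continuous_fst).add
    (Continuous.clm_comp ((innerSL ℝ (E := Y)).continuous.comp continuous_snd)
      ((hGd1.continuous).comp continuous_fst))

end MyAux

set_option maxHeartbeats 2000000 in
/-- under (A1), (A2), `σ(v)·‖μ(v)‖ → 0` as `‖v - v̄‖_V → 0`. -/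
theorem stmt4
    (f : X → ℝ) (G : X → Y) (K : Set Y) (PK : Y → Y) (ν : ℝ)
    (hK : K.Nonempty) (hKc : IsClosed K) (hKv : Convex ℝ K)
    (hf : ContDiff ℝ 2 f) (hG : ContDiff ℝ 2 G)
    (hPK : ∀ y : Y, PK y ∈ K ∧ ∀ k ∈ K, ‖y - PK y‖ ≤ ‖y - k‖)
    (hν : 0 < ν)
    (xb : X) (lb : Y) (hKKT : IsKKT f G K (xb, lb))
    (hA1 : SRCQ G K (xb, lb))
    (c η : ℝ) (hc : 0 < c) (hη : 0 < η)
    (hA2 : ∀ d : X, fderiv ℝ f xb d ≤ η * ‖d‖ → fderiv ℝ G xb d ∈ TK K (G xb) →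
      c * ‖d‖ ^ 2 ≤ LxxD f G (xb, lb) d d)
    (hνa : ∃ κ > (0:ℝ), ∀ d : X, ‖d‖ ≤ ν →
      infDist d {d' : X | fderiv ℝ G xb d' ∈ TK K (G xb)} ≤
        κ * infDist (G xb + fderiv ℝ G xb d) K)
    (hνb : ∀ d : X, ‖d‖ ≤ ν → -(η / 4) * ‖d‖ ≤ LxxD f G (xb, lb) d d)
    (w : X × Y → X × Y)
    (hw : ∀ v : X × Y, ¬ IsKKT f G K v →
      IsEpsOpt f G K PK ν v (w v) (sigmaF f G PK v ^ 6)) :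
    ∀ ε > (0:ℝ), ∃ δ > (0:ℝ), ∀ v : X × Y, ¬ IsKKT f G K v →
      ‖v.1 - xb‖ + ‖v.2 - lb‖ < δ →
      sigmaF f G PK v * ‖(w v).2‖ < ε := by
  intro ε hε
  classical
  have hfd1 : ContDiff ℝ 1 (fderiv ℝ f) := hf.fderiv_right (by norm_num)
  have hGd1 : ContDiff ℝ 1 (fderiv ℝ G) := hG.fderiv_right (by norm_num)
  set m : X → ℝ := fun x =>
    ‖fderiv ℝ f x‖ + ‖fderiv ℝ (fderiv ℝ f) x‖ + ‖fderiv ℝ (fderiv ℝ G) x‖ with hm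
  have cm : Continuous m :=
    ((hfd1.continuous.norm).add (hfd1.continuous_fderiv one_ne_zero).norm).add
      (hGd1.continuous_fderiv one_ne_zero).norm
  have hmnn : ∀ x : X, 0 ≤ m x := fun x => by positivity
  set M : ℝ := m xb + 1 with hM
  clear_value M
  have hM0 : 0 < M := by have := hmnn xb; rw [hM]; linarith
  obtain ⟨r, hr0, hrM⟩ : ∃ r > (0:ℝ), ∀ x : X, dist x xb < r → m x < M := by
    obtain ⟨r, hr0, h⟩ := Metric.continuousAt_iff.1 cm.continuousAt 1 one_pos
    refine ⟨r, hr0, fun x hx => ?_⟩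
    have h2 := h hx
    rw [Real.dist_eq] at h2
    have := (abs_lt.1 h2).2
    rw [hM]; linarith
  clear_value m
  set Λ : ℝ := ‖lb‖ + 1 with hΛ
  clear_value Λ
  have hΛ0 : 0 < Λ := by rw [hΛ]; positivity
  set C₀ : ℝ := M * ν + (1/2) * (M * (1 + Λ)) * ν^2 + (1/2) * (Λ + 1)^2 + 1 with hC₀
  clear_value C₀
  have hC₀0 : 0 < C₀ := by
    have h1 : 0 ≤ M * ν := mul_nonneg hM0.le hν.le
    have h2 : 0 ≤ (M * (1 + Λ)) * ν^2 :=
      mul_nonneg (mul_nonneg hM0.le (by linarith)) (sq_nonneg ν)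
    have h3 : (0:ℝ) ≤ (Λ + 1)^2 := sq_nonneg _
    rw [hC₀]; linarith
  set s : ℝ := min 1 (ε^2 / (2*C₀)) with hs
  clear_value s
  have hs0 : 0 < s := by
    rw [hs]; exact lt_min one_pos (div_pos (pow_pos hε 2) (by linarith))
  have hLxDb : LxD f G (xb, lb) = 0 := hKKT.2.1
  have hGxb : PK (G xb + lb) = G xb := my_proj_fixed PK hPK hKKT.1 hKKT.2.2
  set su : X × Y → ℝ := fun v => ‖LxD f G v‖ + 2*‖G v.1 - G xb‖ + ‖v.2 - lb‖ with hsu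
  have csu : Continuous su := by
    refine Continuous.add (Continuous.add (my_lxd_cont f G hf hG).norm ?_) ?_
    · exact continuous_const.mul ((hG.continuous.comp continuous_fst).sub continuous_const).norm
    · exact (continuous_snd.sub continuous_const).norm
  clear_value su
  have hsuv : su (xb, lb) = 0 := by rw [hsu]; simp [hLxDb]
  obtain ⟨δ₁, hδ₁0, hδ₁⟩ : ∃ δ₁ > (0:ℝ), ∀ v : X × Y, dist v (xb, lb) < δ₁ → su v < s := by
    obtain ⟨δ₁, h0, h⟩ := Metric.continuousAt_iff.1 csu.continuousAt s hs0
    refine ⟨δ₁, h0, fun v hv => ?_⟩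
    have h2 := h hv
    rw [Real.dist_eq, hsuv, sub_zero] at h2
    exact (abs_lt.1 h2).2
  refine ⟨min δ₁ (min r 1), lt_min hδ₁0 (lt_min hr0 one_pos), fun v hv hdist => ?_⟩
  obtain ⟨x, lam⟩ := v
  have hd : ‖x - xb‖ + ‖lam - lb‖ < min δ₁ (min r 1) := hdist
  have hmin1 : min δ₁ (min r 1) ≤ δ₁ := min_le_left _ _
  have hminr : min δ₁ (min r 1) ≤ r := le_trans (min_le_right _ _) (min_le_left _ _)
  have hmin_1 : min δ₁ (min r 1) ≤ 1 := le_trans (min_le_right _ _) (min_le_right _ _)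
  have hnx := norm_nonneg (x - xb)
  have hnl := norm_nonneg (lam - lb)
  set σ : ℝ := sigmaF f G PK (x, lam) with hσdef
  have hσnn : 0 ≤ σ := add_nonneg (norm_nonneg _) (norm_nonneg _)
  have hxr : dist x xb < r := by rw [dist_eq_norm]; linarith
  have hlam1 : ‖lam‖ ≤ Λ := by
    have h := norm_add_le (lam - lb) lb
    rw [show lam - lb + lb = lam by abel] at h
    simp only [hΛ]; linarith
  have hdistv : dist ((x, lam) : X × Y) (xb, lb) < δ₁ := by
    rw [Prod.dist_eq]
    apply max_lt
    · rw [dist_eq_norm]; linarith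
    · rw [dist_eq_norm]; linarith
  have hsub := hδ₁ _ hdistv
  have hσle : σ ≤ su (x, lam) := by
    have hlip := my_proj_lip hKv PK hPK (G xb + lb) (G x + lam)
    have t1 := dist_triangle (G x) (G xb) (PK (G x + lam))
    rw [dist_eq_norm, dist_eq_norm, dist_eq_norm] at t1
    have t2 : ‖G xb - PK (G x + lam)‖ = ‖PK (G xb + lb) - PK (G x + lam)‖ := by rw [hGxb]
    have t4 : ‖(G xb + lb) - (G x + lam)‖ ≤ ‖G x - G xb‖ + ‖lam - lb‖ := by
      have h := norm_add_le (G xb - G x) (lb - lam)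
      rw [show G xb + lb - (G x + lam) = (G xb - G x) + (lb - lam) by abel]
      rw [norm_sub_rev (G xb) (G x), norm_sub_rev lb lam] at h
      exact h
    simp only [hσdef, sigmaF, hsu]
    have := hlip
    linarith
  have hσs : σ < s := lt_of_le_of_lt hσle hsub
  rw [hs] at hσs
  have hσ1 : σ ≤ 1 := le_of_lt (lt_of_lt_of_le hσs (min_le_left _ _))
  have hσε : 2*C₀*σ < ε^2 := by
    have h2 : σ < ε^2/(2*C₀) := lt_of_lt_of_le hσs (min_le_right _ _)
    have hne : 2*C₀ ≠ 0 := ne_of_gt (by linarith only [hC₀0])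
    calc 2*C₀*σ < 2*C₀*(ε^2/(2*C₀)) := by
          exact mul_lt_mul_of_pos_left h2 (by linarith only [hC₀0])
      _ = ε^2 := by rw [mul_comm]; exact div_mul_cancel₀ _ hne
  rcases eq_or_lt_of_le hσnn with hσ0 | hσpos
  · show σ * ‖(w (x, lam)).2‖ < ε
    rw [← hσ0, zero_mul]; exact hε
  · have hσne : σ ≠ 0 := ne_of_gt hσpos
    obtain ⟨⟨hfw1, hfw2⟩, hopt⟩ := hw (x, lam) hv
    have hmx : m x < M := hrM x hxr
    simp only [hm] at hmx
    have hb1 : ‖fderiv ℝ f x‖ ≤ M := by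
      linarith only [hmx, norm_nonneg (fderiv ℝ (fderiv ℝ f) x),
        norm_nonneg (fderiv ℝ (fderiv ℝ G) x)]
    have hb2 : ‖fderiv ℝ (fderiv ℝ f) x‖ ≤ M := by
      linarith only [hmx, norm_nonneg (fderiv ℝ f x), norm_nonneg (fderiv ℝ (fderiv ℝ G) x)]
    have hb3 : ‖fderiv ℝ (fderiv ℝ G) x‖ ≤ M := by
      linarith only [hmx, norm_nonneg (fderiv ℝ f x), norm_nonneg (fderiv ℝ (fderiv ℝ f) x)]
    have hLxxb : ‖LxxD f G (x, lam)‖ ≤ M * (1 + Λ) := by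
      refine le_trans (my_lxx_norm f G hf hG x lam) ?_
      have h1 : ‖lam‖ * ‖fderiv ℝ (fderiv ℝ G) x‖ ≤ Λ * M :=
        mul_le_mul hlam1 hb3 (norm_nonneg (fderiv ℝ (fderiv ℝ G) x)) hΛ0.le
      calc ‖fderiv ℝ (fderiv ℝ f) x‖ + ‖lam‖ * ‖fderiv ℝ (fderiv ℝ G) x‖
          ≤ M + Λ * M := add_le_add hb2 h1
        _ = M * (1 + Λ) := by ring
    have hlower : ∀ w' : X × Y, FeasQ f G K PK ν (x, lam) w' →
        -(M*ν) - (1/2)*(M*(1+Λ))*ν^2 + (σ/2)*‖w'.2‖^2 ≤ phiQ f G PK (x, lam) w' := by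
      rintro ⟨d', μ'⟩ ⟨-, hd'⟩
      have e1 : |fderiv ℝ f x d'| ≤ M * ν := by
        have h := (fderiv ℝ f x).le_opNorm d'
        rw [Real.norm_eq_abs] at h
        exact h.trans (mul_le_mul hb1 hd' (norm_nonneg _) hM0.le)
      have e2 : |LxxD f G (x, lam) d' d'| ≤ (M*(1+Λ)) * ν^2 := by
        have h1 := (LxxD f G (x, lam) d').le_opNorm d'
        have h2 := (LxxD f G (x, lam)).le_opNorm d'
        rw [Real.norm_eq_abs] at h1
        have hMΛ : (0:ℝ) ≤ M*(1+Λ) := mul_nonneg hM0.le (by linarith only [hΛ0])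
        have h3 : ‖LxxD f G (x, lam) d'‖ * ‖d'‖ ≤ (M*(1+Λ)) * ν^2 := by
          have h4 : ‖LxxD f G (x, lam) d'‖ ≤ M*(1+Λ) * ν := by
            exact h2.trans (mul_le_mul hLxxb hd' (norm_nonneg d') hMΛ)
          have h5 := mul_le_mul h4 hd' (norm_nonneg d') (mul_nonneg hMΛ hν.le)
          exact h5.trans (le_of_eq (by ring))
        exact h1.trans h3
      show _ ≤ fderiv ℝ f x d' + (1/2) * LxxD f G (x, lam) d' d' + (σ/2) * ‖μ'‖^2
      have a1 := neg_abs_le (fderiv ℝ f x d')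
      have a2 := neg_abs_le (LxxD f G (x, lam) d' d')
      linarith only [a1, a2, e1, e2]
    set d : X := (w (x, lam)).1 with hdd
    set μ : Y := (w (x, lam)).2 with hμμ
    set μ0 : Y := lam + σ⁻¹ • (G x - PK (G x + lam)) with hμ0
    have hfeas0 : FeasQ f G K PK ν (x, lam) ((0:X), μ0) := by
      constructor
      · show G x + fderiv ℝ G x 0 - σ • (μ0 - lam) ∈ K
        have e : G x + fderiv ℝ G x 0 - σ • (μ0 - lam) = PK (G x + lam) := by
          rw [map_zero]
          simp only [hμ0, add_sub_cancel_left]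
          rw [smul_smul, mul_inv_cancel₀ hσne, one_smul]
          abel
        rw [e]
        exact (hPK _).1
      · show ‖(0:X)‖ ≤ ν
        simpa using hν.le
    have hzσ : ‖G x - PK (G x + lam)‖ ≤ σ := by
      rw [hσdef]
      simp only [sigmaF]
      linarith only [norm_nonneg (LxD f G (x, lam))]
    have hμ0n : ‖μ0‖ ≤ Λ + 1 := by
      have h2 := norm_add_le lam (σ⁻¹ • (G x - PK (G x + lam)))
      rw [norm_smul, Real.norm_eq_abs, abs_of_pos (inv_pos.2 hσpos)] at h2
      have h3 : σ⁻¹ * ‖G x - PK (G x + lam)‖ ≤ 1 := by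
        have h4 := mul_le_mul_of_nonneg_left hzσ (inv_pos.2 hσpos).le
        rwa [inv_mul_cancel₀ hσne] at h4
      simp only [hμ0]
      linarith only [h2, h3, hlam1]
    have hphi0 : phiQ f G PK (x, lam) ((0:X), μ0) = (σ/2) * ‖μ0‖^2 := by
      show fderiv ℝ f x 0 + (1/2) * LxxD f G (x, lam) 0 0 + (σ/2) * ‖μ0‖^2 = (σ/2) * ‖μ0‖^2
      simp only [map_zero, ContinuousLinearMap.zero_apply]
      ring
    have hSbdd : BddBelow (phiQ f G PK (x, lam) '' {w' | FeasQ f G K PK ν (x, lam) w'}) := by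
      refine ⟨-(M*ν) - (1/2)*(M*(1+Λ))*ν^2, ?_⟩
      rintro a ⟨w', hw', rfl⟩
      have h := hlower w' hw'
      have h2 : 0 ≤ (σ/2) * ‖w'.2‖^2 :=
        mul_nonneg (by linarith only [hσnn]) (sq_nonneg _)
      linarith only [h, h2]
    have hinf : sInf (phiQ f G PK (x, lam) '' {w' | FeasQ f G K PK ν (x, lam) w'})
        ≤ (σ/2) * ‖μ0‖^2 := by
      rw [← hphi0]
      exact csInf_le hSbdd ⟨_, hfeas0, rfl⟩
    have hup : phiQ f G PK (x, lam) (w (x, lam)) ≤ (σ/2) * ‖μ0‖^2 + σ^6 := by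
      have hopt2 := hopt
      rw [← hσdef] at hopt2
      linarith only [hopt2, hinf]
    have hlow2 := hlower (w (x, lam)) ⟨hfw1, hfw2⟩
    have hμ0sq : ‖μ0‖^2 ≤ (Λ+1)^2 := pow_le_pow_left₀ (norm_nonneg _) hμ0n 2
    have hσ6 : σ^6 ≤ 1 := pow_le_one₀ hσnn hσ1
    have t1 : (σ/2) * ‖μ0‖^2 ≤ (1/2) * (Λ+1)^2 := by
      have h := mul_le_mul hσ1 hμ0sq (sq_nonneg ‖μ0‖) (by norm_num)
      linarith only [h]
    have hkey : (σ/2) * ‖μ‖^2 ≤ C₀ := by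
      rw [hC₀]
      linarith only [hup, hlow2, t1, hσ6]
    show σ * ‖μ‖ < ε
    have hfinal : (σ * ‖μ‖)^2 < ε^2 := by
      have h1 : σ * (σ * ‖μ‖^2) ≤ σ * (2*C₀) :=
        mul_le_mul_of_nonneg_left (by linarith only [hkey]) hσnn
      calc (σ * ‖μ‖)^2 = σ * (σ * ‖μ‖^2) := by ring
        _ ≤ σ * (2*C₀) := h1
        _ = 2*C₀*σ := by ring
        _ < ε^2 := hσε
    have hprod : 0 ≤ σ * ‖μ‖ := mul_nonneg hσnn (norm_nonneg _)
    exact lt_of_pow_lt_pow_left₀ 2 hε.le hfinal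
end
end

section
/- Suppose the KKT point v̄ = (x̄, λ̄) satisfies (A1) and (A2), and for each v ∈ V \ Γ let w(v) = (d(v), μ(v)) be a σ(v)^6-optimal solution of Q(v). Then there exist m > 0 and r > 0 such that ⟨f'(x), d(v)⟩ + (1/2)⟨L_xx(v)d(v), d(v)⟩ ≤ m·σ(v) for all v = (x, λ) ∈ V \ Γ with ‖v − v̄‖_V ≤ r. -/
open Filter Topology Metric Set

noncomputable section

variable {X Y : Type*} [NormedAddCommGroup X] [NormedSpace ℝ X] [CompleteSpace X]
  [NormedAddCommGroup Y] [InnerProductSpace ℝ Y] [CompleteSpace Y]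

set_option maxHeartbeats 1600000 in
/-- under (A1), (A2), there are `m > 0`, `r > 0` with
`⟨f'(x), d(v)⟩ + (1/2)⟨L_xx(v)d(v), d(v)⟩ ≤ m σ(v)` for all `v ∈ V \ Γ` near `v̄`. -/
theorem stmt6
    (f : X → ℝ) (G : X → Y) (K : Set Y) (PK : Y → Y) (ν : ℝ)
    (hK : K.Nonempty) (hKc : IsClosed K) (hKv : Convex ℝ K)
    (hf : ContDiff ℝ 2 f) (hG : ContDiff ℝ 2 G)
    (hPK : ∀ y : Y, PK y ∈ K ∧ ∀ k ∈ K, ‖y - PK y‖ ≤ ‖y - k‖)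
    (hν : 0 < ν)
    (xb : X) (lb : Y) (hKKT : IsKKT f G K (xb, lb))
    (hA1 : SRCQ G K (xb, lb))
    (c η : ℝ) (hc : 0 < c) (hη : 0 < η)
    (hA2 : ∀ d : X, fderiv ℝ f xb d ≤ η * ‖d‖ → fderiv ℝ G xb d ∈ TK K (G xb) →
      c * ‖d‖ ^ 2 ≤ LxxD f G (xb, lb) d d)
    (hνa : ∃ κ > (0:ℝ), ∀ d : X, ‖d‖ ≤ ν →
      infDist d {d' : X | fderiv ℝ G xb d' ∈ TK K (G xb)} ≤
        κ * infDist (G xb + fderiv ℝ G xb d) K)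
    (hνb : ∀ d : X, ‖d‖ ≤ ν → -(η / 4) * ‖d‖ ≤ LxxD f G (xb, lb) d d)
    (w : X × Y → X × Y)
    (hw : ∀ v : X × Y, ¬ IsKKT f G K v →
      IsEpsOpt f G K PK ν v (w v) (sigmaF f G PK v ^ 6)) :
    ∃ m > (0:ℝ), ∃ r > (0:ℝ), ∀ v : X × Y, ¬ IsKKT f G K v →
      ‖v.1 - xb‖ + ‖v.2 - lb‖ ≤ r →
      fderiv ℝ f v.1 (w v).1 + (1 / 2) * LxxD f G v (w v).1 (w v).1 ≤ m * sigmaF f G PK v := by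
  classical
  -- continuity data
  have hfd : Continuous fun x : X => fderiv ℝ f x := hf.continuous_fderiv two_ne_zero
  have hGd : Continuous fun x : X => fderiv ℝ G x := hG.continuous_fderiv two_ne_zero
  have hGc : Continuous G := hG.continuous
  obtain ⟨δ1, hδ1, H1⟩ := Metric.continuousAt_iff.mp (hfd.norm.continuousAt (x := xb)) 1 one_pos
  obtain ⟨δ2, hδ2, H2⟩ := Metric.continuousAt_iff.mp (hGd.norm.continuousAt (x := xb)) 1 one_pos
  obtain ⟨δ3, hδ3, H3⟩ := Metric.continuousAt_iff.mp (hGc.continuousAt (x := xb)) 1 one_pos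
  set B : ℝ := ‖lb‖ + 1 with hB
  set M : ℝ := (‖fderiv ℝ f xb‖ + 1) + B * (‖fderiv ℝ G xb‖ + 1) + (1 + 2 * B) with hM
  have hBpos : (1:ℝ) ≤ B := by rw [hB]; linarith [norm_nonneg lb]
  have hMpos : 0 < M := by
    have h1 := norm_nonneg (fderiv ℝ f xb)
    have h2 := norm_nonneg (fderiv ℝ G xb)
    have : 0 ≤ B * (‖fderiv ℝ G xb‖ + 1) := by nlinarith
    nlinarith
  refine ⟨(B + 1) ^ 2 / 2 + M ^ 5, by positivity, min 1 (min δ1 (min δ2 δ3)) / 2, by positivity, ?_⟩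
  set r : ℝ := min 1 (min δ1 (min δ2 δ3)) / 2 with hr
  rintro ⟨x, lam⟩ hv hnear
  simp only at hnear
  set σ : ℝ := sigmaF f G PK (x, lam) with hσdef
  have hσ0 : 0 ≤ σ := add_nonneg (norm_nonneg _) (norm_nonneg _)
  -- distances
  have hxr : ‖x - xb‖ ≤ r := by have := norm_nonneg (lam - lb); linarith
  have hlr : ‖lam - lb‖ ≤ r := by have := norm_nonneg (x - xb); linarith
  have hr1 : r ≤ 1 / 2 := by
    have : min 1 (min δ1 (min δ2 δ3)) ≤ 1 := min_le_left _ _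
    rw [hr]; linarith
  have hrδ1 : r < δ1 := by
    have : min 1 (min δ1 (min δ2 δ3)) ≤ δ1 := le_trans (min_le_right _ _) (min_le_left _ _)
    rw [hr]; linarith
  have hrδ2 : r < δ2 := by
    have : min 1 (min δ1 (min δ2 δ3)) ≤ δ2 :=
      le_trans (min_le_right _ _) (le_trans (min_le_right _ _) (min_le_left _ _))
    rw [hr]; linarith
  have hrδ3 : r < δ3 := by
    have : min 1 (min δ1 (min δ2 δ3)) ≤ δ3 :=
      le_trans (min_le_right _ _) (le_trans (min_le_right _ _) (min_le_right _ _))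
    rw [hr]; linarith
  have hdx : dist x xb ≤ r := by rw [dist_eq_norm]; exact hxr
  have hlam : ‖lam‖ ≤ B := by
    have : ‖lam‖ ≤ ‖lam - lb‖ + ‖lb‖ := by
      simpa using norm_add_le (lam - lb) lb
    rw [hB]; linarith
  -- local bounds
  have hax : ‖fderiv ℝ f x‖ ≤ ‖fderiv ℝ f xb‖ + 1 := by
    have := H1 (lt_of_le_of_lt hdx hrδ1)
    rw [Real.dist_eq] at this
    have := abs_sub_lt_iff.mp this
    linarith [this.1]
  have hbx : ‖fderiv ℝ G x‖ ≤ ‖fderiv ℝ G xb‖ + 1 := by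
    have := H2 (lt_of_le_of_lt hdx hrδ2)
    rw [Real.dist_eq] at this
    have := abs_sub_lt_iff.mp this
    linarith [this.1]
  have hgx : ‖G x - G xb‖ ≤ 1 := by
    have := H3 (lt_of_le_of_lt hdx hrδ3)
    rw [dist_eq_norm] at this
    linarith
  -- bound on σ
  have hGxbK : G xb ∈ K := hKKT.1
  set z : Y := G x - PK (G x + lam) with hz
  have hzσ : ‖z‖ ≤ σ := le_add_of_nonneg_left (norm_nonneg _)
  have hzbd : ‖z‖ ≤ 1 + 2 * B := by
    have h1 : ‖G x + lam - PK (G x + lam)‖ ≤ ‖G x + lam - G xb‖ := (hPK _).2 _ hGxbK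
    have e1 : z = (G x + lam - PK (G x + lam)) - lam := by rw [hz]; abel
    have e2 : G x + lam - G xb = (G x - G xb) + lam := by abel
    have h2 : ‖z‖ ≤ ‖G x + lam - PK (G x + lam)‖ + ‖lam‖ := by
      rw [e1]; exact norm_sub_le _ _
    have h3 : ‖G x + lam - G xb‖ ≤ ‖G x - G xb‖ + ‖lam‖ := by
      rw [e2]; exact norm_add_le _ _
    linarith
  have hLxD : ‖LxD f G (x, lam)‖ ≤ (‖fderiv ℝ f xb‖ + 1) + B * (‖fderiv ℝ G xb‖ + 1) := by
    have h1 : ‖LxD f G (x, lam)‖ ≤ ‖fderiv ℝ f x‖ + ‖adjT G x lam‖ := norm_add_le _ _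
    have h2 : ‖adjT G x lam‖ ≤ ‖lam‖ * ‖fderiv ℝ G x‖ := by
      have := ContinuousLinearMap.opNorm_comp_le (innerSL ℝ lam) (fderiv ℝ G x)
      simpa [adjT, innerSL_apply_norm] using this
    have h3 : ‖lam‖ * ‖fderiv ℝ G x‖ ≤ B * (‖fderiv ℝ G xb‖ + 1) := by
      have := norm_nonneg (fderiv ℝ G x)
      have hB0 : (0:ℝ) ≤ B := by linarith
      nlinarith
    linarith
  have hσM : σ ≤ M := by
    have : σ = ‖LxD f G (x, lam)‖ + ‖z‖ := rfl
    rw [this, hM]; linarith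
  -- the comparison feasible point (0, μ0)
  have hz0 : σ = 0 → z = 0 := by
    intro h
    have : ‖z‖ = 0 := by
      have h1 := norm_nonneg (LxD f G (x, lam))
      have h2 := norm_nonneg z
      have : ‖LxD f G (x, lam)‖ + ‖z‖ = 0 := h
      linarith
    simpa using this
  set μ0 : Y := lam + σ⁻¹ • z with hμ0
  have hfeas : FeasQ f G K PK ν (x, lam) (0, μ0) := by
    constructor
    · have hσz : σ • σ⁻¹ • z = z := by
        by_cases h : σ = 0
        · rw [hz0 h]; simp
        · rw [smul_smul, mul_inv_cancel₀ h, one_smul]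
      have : G x + fderiv ℝ G x 0 - σ • (μ0 - lam) = PK (G x + lam) := by
        rw [hμ0]
        simp only [map_zero, add_sub_cancel_left, hσz]
        rw [hz]; abel
      rw [show sigmaF f G PK (x, lam) = σ from rfl, this]
      exact (hPK _).1
    · simpa using hν.le
  have hμ0bd : ‖μ0‖ ≤ B + 1 := by
    have h1 : ‖σ⁻¹ • z‖ ≤ 1 := by
      rw [norm_smul, norm_inv, Real.norm_eq_abs, abs_of_nonneg hσ0]
      by_cases h : σ = 0
      · rw [hz0 h]; simp
      · have hσpos : 0 < σ := lt_of_le_of_ne hσ0 (Ne.symm h)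
        have : σ⁻¹ * ‖z‖ ≤ σ⁻¹ * σ := mul_le_mul_of_nonneg_left hzσ (inv_nonneg.2 hσ0)
        rw [inv_mul_cancel₀ h] at this
        exact this
    have := norm_add_le lam (σ⁻¹ • z)
    rw [hμ0]; linarith
  have hφ0 : phiQ f G PK (x, lam) (0, μ0) = (σ / 2) * ‖μ0‖ ^ 2 := by
    simp [phiQ, hσdef]
  -- ε-optimality
  obtain ⟨hwfeas, hwopt⟩ := hw (x, lam) hv
  have hLHS : fderiv ℝ f x (w (x, lam)).1 + (1 / 2) * LxxD f G (x, lam) (w (x, lam)).1 (w (x, lam)).1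
      = phiQ f G PK (x, lam) (w (x, lam)) - (σ / 2) * ‖(w (x, lam)).2‖ ^ 2 := by
    simp only [phiQ, hσdef]; ring
  have hμterm : 0 ≤ (σ / 2) * ‖(w (x, lam)).2‖ ^ 2 := by positivity
  have hσ6 : σ ^ 6 ≤ M ^ 5 * σ := by
    have h5 : σ ^ 5 ≤ M ^ 5 := pow_le_pow_left₀ hσ0 hσM 5
    calc σ ^ 6 = σ ^ 5 * σ := by ring
      _ ≤ M ^ 5 * σ := mul_le_mul_of_nonneg_right h5 hσ0
  have hφw : phiQ f G PK (x, lam) (w (x, lam)) ≤ (σ / 2) * (B + 1) ^ 2 + σ ^ 6 := by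
    by_cases hbdd : BddBelow (phiQ f G PK (x, lam) '' {w' | FeasQ f G K PK ν (x, lam) w'})
    · have hmem : phiQ f G PK (x, lam) (0, μ0) ∈
          phiQ f G PK (x, lam) '' {w' | FeasQ f G K PK ν (x, lam) w'} :=
        ⟨(0, μ0), hfeas, rfl⟩
      have hinf := csInf_le hbdd hmem
      have hb : phiQ f G PK (x, lam) (0, μ0) ≤ (σ / 2) * (B + 1) ^ 2 := by
        rw [hφ0]
        have hsq : ‖μ0‖ ^ 2 ≤ (B + 1) ^ 2 := by nlinarith [norm_nonneg μ0]
        have h0 : 0 ≤ σ / 2 := by linarith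
        exact mul_le_mul_of_nonneg_left hsq h0
      have := hwopt
      rw [← hσdef] at this
      linarith
    · rw [Real.sInf_of_not_bddBelow hbdd, ← hσdef] at hwopt
      have : 0 ≤ (σ / 2) * (B + 1) ^ 2 := by positivity
      linarith
  rw [hLHS]
  have hfin : phiQ f G PK (x, lam) (w (x, lam)) ≤ ((B + 1) ^ 2 / 2 + M ^ 5) * σ :=
    calc phiQ f G PK (x, lam) (w (x, lam)) ≤ σ / 2 * (B + 1) ^ 2 + σ ^ 6 := hφw
      _ ≤ σ / 2 * (B + 1) ^ 2 + M ^ 5 * σ := add_le_add_right hσ6 _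
      _ = ((B + 1) ^ 2 / 2 + M ^ 5) * σ := by ring
  linarith
end
end
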